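/- arXiv:1402.2471 — 9 statements merged into one kernel-verified Lean document; each statement's English description precedes it below -/
import Mathlib

section
/- If a K_{s,t}-saturated n-by-n bipartite graph has minimum degree δ with δ < t-1, then it contains at least n(s+t-2) - (s+t-2)^2 edges. -/
open Finset

/-- The bipartite graph (with parts indexed by `Fin n`) whose edge set is `E`
contains a complete bipartite graph with `a` vertices on the left and `b` on the right. -/
def containsK {n : ℕ} (E : Finset (Fin n × Fin n)) (a b : ℕ) : Prop :=
  ∃ S T : Finset (Fin n), S.card = a ∧ T.card = b ∧ ∀ u ∈ S, ∀ v ∈ T, (u, v) ∈ E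

/-- `E` is (unordered) `K_{s,t}`-saturated: no copy of `K_{s,t}` in either orientation,
and adding any missing edge creates one. -/
def Saturated {n : ℕ} (s t : ℕ) (E : Finset (Fin n × Fin n)) : Prop :=
  ¬ (containsK E s t ∨ containsK E t s) ∧
    ∀ u v : Fin n, (u, v) ∉ E →
      (containsK (insert (u, v) E) s t ∨ containsK (insert (u, v) E) t s)

/-- Degree of a left vertex. -/
def degL {n : ℕ} (E : Finset (Fin n × Fin n)) (u : Fin n) : ℕ :=
  (E.filter fun p => p.1 = u).card

/-- Degree of a right vertex. -/
def degR {n : ℕ} (E : Finset (Fin n × Fin n)) (v : Fin n) : ℕ :=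
  (E.filter fun p => p.2 = v).card

/-!
Let `u₀` be a left vertex of minimum degree `δ < t - 1` (otherwise swap the sides) and `N` its
neighbourhood. Adding a missing edge `u₀v` cannot create a `K_{s,t}` with `u₀` in the `s`-class,
since `v` would then need `t - 1` neighbours inside `N`; so it creates a `K_{t,s}`, whose other
`t - 1` left vertices are adjacent to `v` and to `s - 1` common vertices of `N`. Hence, with `Z`
the left vertices having at least `s - 1` neighbours in `N`, every `v ∉ N` has `t - 1` neighbours
in `Z`, and `s - 1 ≤ δ`. Counting the edges at `Z` (into `N` and out of `N`) and at its complement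
gives `e(G) ≥ (s - 1) n + (t - 1)(n - δ) ≥ n (s + t - 2) - (s + t - 2)²`.
-/

section Counting

variable {α β : Type*} [DecidableEq α] [DecidableEq β] [Fintype β]

def leftNbhd (E : Finset (α × β)) (u : α) : Finset β :=
  univ.filter fun v => (u, v) ∈ E

@[simp]
lemma mem_leftNbhd {E : Finset (α × β)} {u : α} {v : β} : v ∈ leftNbhd E u ↔ (u, v) ∈ E := by
  simp [leftNbhd]

lemma card_filter_fst_eq_card_leftNbhd (E : Finset (α × β)) (u : α) :
    #(E.filter fun p => p.1 = u) = #(leftNbhd E u) :=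
  card_nbij' Prod.snd (Prod.mk u)
    (fun p hp => by obtain ⟨hpE, rfl⟩ := mem_filter.1 hp; exact mem_leftNbhd.2 hpE)
    (fun _ hv => mem_filter.2 ⟨mem_leftNbhd.1 hv, rfl⟩)
    (fun p hp => by obtain ⟨-, rfl⟩ := mem_filter.1 hp; rfl) (fun _ _ => rfl)

lemma card_eq_sum_card_leftNbhd [Fintype α] (E : Finset (α × β)) :
    #E = ∑ u, #(leftNbhd E u) := by
  rw [card_eq_sum_card_fiberwise (f := Prod.fst) (t := univ) (fun _ _ => mem_univ _)]
  exact sum_congr rfl fun u _ => card_filter_fst_eq_card_leftNbhd E u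

theorem mul_card_add_mul_card_compl_le_card [Fintype α] (E : Finset (α × β)) (N : Finset β)
    {k l : ℕ} (hdeg : ∀ w, k ≤ #(leftNbhd E w))
    (hcov : ∀ v ∉ N, l ≤ #(univ.filter fun w => (w, v) ∈ E ∧ k ≤ #(leftNbhd E w ∩ N))) :
    k * Fintype.card α + l * #Nᶜ ≤ #E := by
  set Z : Finset α := univ.filter fun w => k ≤ #(leftNbhd E w ∩ N)
  let r : α → β → Prop := fun w v => (w, v) ∈ E
  have hZ : ∀ w ∈ Z, k + #(Nᶜ.bipartiteAbove r w) ≤ #(leftNbhd E w) := by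
    intro w hw
    have hsplit : Nᶜ.bipartiteAbove r w = leftNbhd E w \ N := by
      ext v; simp [r, and_comm]
    rw [hsplit, ← card_inter_add_card_sdiff (leftNbhd E w) N]
    exact Nat.add_le_add_right (mem_filter.1 hw).2 _
  have hcross : l * #Nᶜ ≤ ∑ w ∈ Z, #(Nᶜ.bipartiteAbove r w) := by
    rw [sum_card_bipartiteAbove_eq_sum_card_bipartiteBelow, mul_comm]
    refine card_nsmul_le_sum _ _ _ fun v hv => (hcov v (mem_compl.1 hv)).trans_eq ?_
    congr 1; ext w; simp [Z, r, and_comm]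
  calc k * Fintype.card α + l * #Nᶜ
      ≤ ∑ w ∈ Z, (k + #(Nᶜ.bipartiteAbove r w)) + ∑ w ∈ Zᶜ, k := by
        rw [sum_add_distrib, sum_const, sum_const, smul_eq_mul, smul_eq_mul,
          ← card_compl_add_card Z]
        linarith [hcross]
    _ ≤ ∑ w ∈ Z, #(leftNbhd E w) + ∑ w ∈ Zᶜ, #(leftNbhd E w) :=
        add_le_add (sum_le_sum hZ) (sum_le_sum fun w _ => hdeg w)
    _ = #E := by rw [sum_add_sum_compl, card_eq_sum_card_leftNbhd]

end Counting

section Saturation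

variable {n : ℕ}

lemma degL_eq_card_leftNbhd (E : Finset (Fin n × Fin n)) (u : Fin n) :
    degL E u = #(leftNbhd E u) :=
  card_filter_fst_eq_card_leftNbhd E u

lemma exists_of_containsK_insert {E : Finset (Fin n × Fin n)} {a b : ℕ} {u v : Fin n}
    (h : containsK (insert (u, v) E) a b) (hE : ¬ containsK E a b) :
    ∃ S T : Finset (Fin n), #S + 1 = a ∧ #T + 1 = b ∧ (∀ x ∈ S, (x, v) ∈ E) ∧
      (∀ y ∈ T, (u, y) ∈ E) ∧ ∀ x ∈ S, ∀ y ∈ T, (x, y) ∈ E := by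
  obtain ⟨S, T, hS, hT, hST⟩ := h
  obtain ⟨x, hx, y, hy, hxy⟩ : ∃ x ∈ S, ∃ y ∈ T, (x, y) ∉ E := by
    by_contra! hall
    exact hE ⟨S, T, hS, hT, hall⟩
  obtain ⟨rfl, rfl⟩ : x = u ∧ y = v := by
    simpa using (mem_insert.1 (hST x hx y hy)).resolve_right hxy
  have hE_of_ne : ∀ x' ∈ S, ∀ y' ∈ T, (x' ≠ x ∨ y' ≠ y) → (x', y') ∈ E :=
    fun x' hx' y' hy' hne => mem_of_mem_insert_of_ne (hST x' hx' y' hy') (by rintro ⟨⟩; simp at hne)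
  refine ⟨S.erase x, T.erase y, by rw [card_erase_add_one hx, hS],
    by rw [card_erase_add_one hy, hT], fun x' hx' => ?_, fun y' hy' => ?_,
    fun x' hx' y' hy' => ?_⟩
  · exact hE_of_ne x' (mem_of_mem_erase hx') y hy (.inl (ne_of_mem_erase hx'))
  · exact hE_of_ne x hx y' (mem_of_mem_erase hy') (.inr (ne_of_mem_erase hy'))
  · exact hE_of_ne x' (mem_of_mem_erase hx') y' (mem_of_mem_erase hy')
      (.inl (ne_of_mem_erase hx'))

lemma Saturated.exists_biclique_of_notMem {s t : ℕ} {E : Finset (Fin n × Fin n)}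
    (hsat : Saturated s t E) {u v : Fin n} (hu : degL E u < t - 1) (huv : (u, v) ∉ E) :
    ∃ W A : Finset (Fin n), #W + 1 = t ∧ #A + 1 = s ∧ A ⊆ leftNbhd E u ∧
      ∀ w ∈ W, (w, v) ∈ E ∧ A ⊆ leftNbhd E w := by
  rcases hsat.2 u v huv with h | h
  · obtain ⟨_, T, -, hT, -, hTu, -⟩ := exists_of_containsK_insert h fun h' => hsat.1 (.inl h')
    have : #T ≤ degL E u := by
      rw [degL_eq_card_leftNbhd]
      exact card_le_card fun y hy => mem_leftNbhd.2 (hTu y hy)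
    omega
  · obtain ⟨W, A, hW, hA, hWv, hAu, hWA⟩ :=
      exists_of_containsK_insert h fun h' => hsat.1 (.inr h')
    exact ⟨W, A, hW, hA, fun y hy => mem_leftNbhd.2 (hAu y hy),
      fun w hw => ⟨hWv w hw, fun y hy => mem_leftNbhd.2 (hWA w hw y hy)⟩⟩

theorem Saturated.le_card_of_degL_eq {s t δ : ℕ} (htn : t ≤ n) {E : Finset (Fin n × Fin n)}
    (hsat : Saturated s t E) (hmin : ∀ u, δ ≤ degL E u) {u₀ : Fin n} (hu₀ : degL E u₀ = δ)
    (hδ : δ < t - 1) :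
    (s - 1) * n + (t - 1) * (n - δ) ≤ #E := by
  set N := leftNbhd E u₀
  have hN : #N = δ := by rw [← hu₀, degL_eq_card_leftNbhd]
  have hcov : ∀ v ∉ N,
      t - 1 ≤ #(univ.filter fun w => (w, v) ∈ E ∧ s - 1 ≤ #(leftNbhd E w ∩ N)) := by
    intro v hv
    obtain ⟨W, A, hW, hA, hAN, hWA⟩ :=
      hsat.exists_biclique_of_notMem (hu₀ ▸ hδ) (mt mem_leftNbhd.2 hv)
    refine (show t - 1 = #W by omega).trans_le (card_le_card fun w hw => ?_)
    refine mem_filter.2 ⟨mem_univ w, (hWA w hw).1, ?_⟩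
    exact (show s - 1 = #A by omega).trans_le (card_le_card (subset_inter (hWA w hw).2 hAN))
  have hsδ : s - 1 ≤ δ := by
    obtain ⟨v, hv⟩ : ∃ v, v ∉ N := by
      by_contra! hall
      have : #(univ : Finset (Fin n)) ≤ #N := card_le_card fun v _ => hall v
      simp only [card_univ, Fintype.card_fin] at this
      omega
    obtain ⟨-, A, -, hA, hAN, -⟩ :=
      hsat.exists_biclique_of_notMem (hu₀ ▸ hδ) (mt mem_leftNbhd.2 hv)
    have : #A ≤ #N := card_le_card hAN
    omega
  have := mul_card_add_mul_card_compl_le_card E N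
    (fun w => hsδ.trans ((hmin w).trans_eq (degL_eq_card_leftNbhd E w))) hcov
  rwa [Fintype.card_fin, card_compl, Fintype.card_fin, hN] at this

lemma mem_image_swap {α β : Type*} [DecidableEq α] [DecidableEq β] {E : Finset (α × β)}
    {p : β × α} :
    p ∈ E.image Prod.swap ↔ p.swap ∈ E := by
  rw [mem_image]
  exact ⟨by rintro ⟨q, hq, rfl⟩; exact hq, fun h => ⟨p.swap, h, p.swap_swap⟩⟩

lemma containsK_image_swap (E : Finset (Fin n × Fin n)) (a b : ℕ) :
    containsK (E.image Prod.swap) a b ↔ containsK E b a := by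
  constructor <;> rintro ⟨S, T, hS, hT, h⟩ <;>
    exact ⟨T, S, hT, hS, fun u hu v hv => by simpa [mem_image_swap] using h v hv u hu⟩

lemma Saturated.image_swap {s t : ℕ} {E : Finset (Fin n × Fin n)} (hsat : Saturated s t E) :
    Saturated s t (E.image Prod.swap) := by
  refine ⟨by rw [containsK_image_swap, containsK_image_swap, or_comm]; exact hsat.1,
    fun u v huv => ?_⟩
  have hins : insert (u, v) (E.image Prod.swap) = (insert (v, u) E).image Prod.swap := by
    rw [image_insert]; rfl
  rw [hins, containsK_image_swap, containsK_image_swap, or_comm]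
  exact hsat.2 v u (by simpa [mem_image_swap] using huv)

lemma degL_image_swap (E : Finset (Fin n × Fin n)) (v : Fin n) :
    degL (E.image Prod.swap) v = degR E v :=
  card_nbij' Prod.swap Prod.swap
    (fun _ hp => mem_filter.2 ⟨mem_image_swap.1 (mem_filter.1 hp).1, (mem_filter.1 hp).2⟩)
    (fun _ hp => mem_filter.2 ⟨mem_image_swap.2 (mem_filter.1 hp).1, (mem_filter.1 hp).2⟩)
    (fun p _ => p.swap_swap) (fun p _ => p.swap_swap)

end Saturation

theorem stmt1_general (n s t δ : ℕ) (hs : 1 ≤ s) (htn : t ≤ n)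
    (E : Finset (Fin n × Fin n)) (hsat : Saturated s t E)
    (hminL : ∀ u : Fin n, δ ≤ degL E u) (hminR : ∀ v : Fin n, δ ≤ degR E v)
    (hatt : (∃ u : Fin n, degL E u = δ) ∨ (∃ v : Fin n, degR E v = δ))
    (hδ : δ < t - 1) :
    (n : ℤ) * (s + t - 2 : ℕ) - ((s + t - 2 : ℕ) : ℤ) ^ 2 ≤ (E.card : ℤ) := by
  obtain ⟨F, hsatF, hminF, ⟨u₀, hu₀⟩, hcard⟩ : ∃ F : Finset (Fin n × Fin n), Saturated s t F ∧
      (∀ u, δ ≤ degL F u) ∧ (∃ u, degL F u = δ) ∧ #F = #E := by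
    rcases hatt with hL | ⟨v, hv⟩
    · exact ⟨E, hsat, hminL, hL, rfl⟩
    · refine ⟨E.image Prod.swap, hsat.image_swap, fun u => ?_, ⟨v, ?_⟩,
        card_image_of_injective _ Prod.swap_injective⟩
      · rw [degL_image_swap]; exact hminR u
      · rw [degL_image_swap]; exact hv
  have key := hsatF.le_card_of_degL_eq htn hminF hu₀ hδ
  rw [← hcard]
  have ht : 1 ≤ t := by omega
  have hδn : δ ≤ n := by omega
  zify [hs, ht, hδn] at key
  push_cast [show 2 ≤ s + t by omega]
  have hδt : (δ : ℤ) ≤ t - 2 := by omega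
  have : ((t : ℤ) - 1) * δ ≤ ((s : ℤ) + t - 2) ^ 2 := by
    rw [sq]; exact mul_le_mul (by linarith) (by linarith) (by positivity) (by linarith)
  linarith

theorem stmt1 (n s t δ : ℕ) (hs : 1 ≤ s) (hst : s ≤ t) (htn : t ≤ n)
    (E : Finset (Fin n × Fin n)) (hsat : Saturated s t E)
    (hminL : ∀ u : Fin n, δ ≤ degL E u) (hminR : ∀ v : Fin n, δ ≤ degR E v)
    (hatt : (∃ u : Fin n, degL E u = δ) ∨ (∃ v : Fin n, degR E v = δ))
    (hδ : δ < t - 1) :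
    (n : ℤ) * (s + t - 2 : ℕ) - ((s + t - 2 : ℕ) : ℤ) ^ 2 ≤ (E.card : ℤ) :=
  stmt1_general n s t δ hs htn E hsat hminL hminR hatt hδ
end

section
/- If a K_{s,t}-saturated n-by-n bipartite graph has minimum degree δ < t-1, then in fact s-1 ≤ δ < t-1. -/
open Finset

/-!
A vertex `u` of degree `δ < t - 1 ≤ n - 1` has a non-neighbour `v`, and adding the edge `uv`
creates a copy of `K_{s,t}` or `K_{t,s}`, which must contain `uv`. All other vertices on the side
of that copy opposite to `u` are already neighbours of `u`, and that side has at least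
`min s t = s` vertices, so `δ ≥ s - 1`. Transposing the graph reduces right vertices to left ones.
-/

variable {n : ℕ}

def transpose (E : Finset (Fin n × Fin n)) : Finset (Fin n × Fin n) :=
  E.map (Equiv.prodComm _ _).toEmbedding

lemma mem_transpose {E : Finset (Fin n × Fin n)} {x y : Fin n} :
    (x, y) ∈ transpose E ↔ (y, x) ∈ E :=
  mem_map_equiv

lemma transpose_insert (E : Finset (Fin n × Fin n)) (u v : Fin n) :
    transpose (insert (u, v) E) = insert (v, u) (transpose E) :=
  map_insert _ _ _

lemma containsK_transpose {E : Finset (Fin n × Fin n)} {a b : ℕ} :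
    containsK (transpose E) a b ↔ containsK E b a := by
  constructor
  · rintro ⟨S, T, hS, hT, h⟩
    exact ⟨T, S, hT, hS, fun y hy x hx => mem_transpose.1 (h x hx y hy)⟩
  · rintro ⟨S, T, hS, hT, h⟩
    exact ⟨T, S, hT, hS, fun y hy x hx => mem_transpose.2 (h x hx y hy)⟩

lemma Saturated.transpose {s t : ℕ} {E : Finset (Fin n × Fin n)} (hsat : Saturated s t E) :
    Saturated s t (transpose E) := by
  refine ⟨by rw [containsK_transpose, containsK_transpose]; exact fun h => hsat.1 h.symm,
    fun v u huv => ?_⟩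
  have := hsat.2 u v (by rwa [mem_transpose] at huv)
  rw [← transpose_insert, containsK_transpose, containsK_transpose]
  exact this.symm

lemma degR_eq_degL_transpose (E : Finset (Fin n × Fin n)) (v : Fin n) :
    degR E v = degL (transpose E) v := by
  rw [degL, transpose, filter_map, card_map]
  rfl

lemma card_le_degL_of_forall_mem {E : Finset (Fin n × Fin n)} {u : Fin n} {T : Finset (Fin n)}
    (hT : ∀ y ∈ T, (u, y) ∈ E) : #T ≤ degL E u :=
  card_le_card_of_injOn (fun y => (u, y)) (fun y hy => mem_filter.2 ⟨hT y hy, rfl⟩)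
    (fun _ _ _ _ h => (Prod.ext_iff.1 h).2)

lemma exists_notMem_of_degL_lt {E : Finset (Fin n × Fin n)} {u : Fin n} (hu : degL E u < n) :
    ∃ v, (u, v) ∉ E := by
  by_contra! h
  have := card_le_degL_of_forall_mem (T := univ) fun y _ => h y
  rw [card_univ, Fintype.card_fin] at this
  omega

lemma sub_one_le_degL_of_containsK_insert {E : Finset (Fin n × Fin n)} {u v : Fin n} {a b : ℕ}
    (hins : containsK (insert (u, v) E) a b) (hE : ¬ containsK E a b) : b - 1 ≤ degL E u := by
  obtain ⟨S, T, hS, hT, h⟩ := hins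
  have huv : u ∈ S ∧ v ∈ T := by
    by_contra huv
    refine hE ⟨S, T, hS, hT, fun x hx y hy => ?_⟩
    rcases mem_insert.1 (h x hx y hy) with hxy | hxy
    · obtain ⟨rfl, rfl⟩ := Prod.ext_iff.1 hxy
      exact absurd ⟨hx, hy⟩ huv
    · exact hxy
  rw [← hT, ← card_erase_of_mem huv.2]
  refine card_le_degL_of_forall_mem fun y hy => ?_
  refine (mem_insert.1 (h u huv.1 y (mem_of_mem_erase hy))).resolve_left fun huy => ?_
  exact ne_of_mem_erase hy (Prod.ext_iff.1 huy).2

lemma Saturated.sub_one_le_degL {s t : ℕ} {E : Finset (Fin n × Fin n)} (hsat : Saturated s t E)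
    (hst : s ≤ t) {u : Fin n} (hu : degL E u < n) : s - 1 ≤ degL E u := by
  obtain ⟨v, huv⟩ := exists_notMem_of_degL_lt hu
  rcases hsat.2 u v huv with h | h
  · have := sub_one_le_degL_of_containsK_insert h fun h' => hsat.1 (Or.inl h')
    omega
  · exact sub_one_le_degL_of_containsK_insert h fun h' => hsat.1 (Or.inr h')

theorem stmt2_general (n s t δ : ℕ) (hst : s ≤ t) (htn : t ≤ n)
    (E : Finset (Fin n × Fin n)) (hsat : Saturated s t E)
    (hatt : (∃ u : Fin n, degL E u = δ) ∨ (∃ v : Fin n, degR E v = δ))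
    (hδ : δ < t - 1) :
    s - 1 ≤ δ := by
  have hδn : δ < n := by omega
  rcases hatt with ⟨u, rfl⟩ | ⟨v, rfl⟩
  · exact hsat.sub_one_le_degL hst hδn
  · rw [degR_eq_degL_transpose] at hδn ⊢
    exact hsat.transpose.sub_one_le_degL hst hδn

theorem stmt2 (n s t δ : ℕ) (hs : 1 ≤ s) (hst : s ≤ t) (htn : t ≤ n)
    (E : Finset (Fin n × Fin n)) (hsat : Saturated s t E)
    (hminL : ∀ u : Fin n, δ ≤ degL E u) (hminR : ∀ v : Fin n, δ ≤ degR E v)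
    (hatt : (∃ u : Fin n, degL E u = δ) ∨ (∃ v : Fin n, degR E v = δ))
    (hδ : δ < t - 1) :
    s - 1 ≤ δ :=
  stmt2_general n s t δ hst htn E hsat hatt hδ
end

section
/- Every K_{2,3}-saturated n-by-n bipartite graph with n ≥ 4 contains at least 3n-2 edges. -/
open Finset

/-!
Saturation enters only through codegrees: two vertices on one side have at most two common
neighbours, and for a non-edge `(u, v)` some neighbour of `v` shares two neighbours with `u`, or
some neighbour of `u` shares two neighbours with `v`. This is symmetric in the two sides, so every
argument also applies to the transposed graph.

Suppose `|E| ≤ 3n - 3`. A left vertex of degree one would force `3n - 2` edges, so all degrees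
are at least two and some left vertex `u` has exactly two neighbours `a, b`. Counting the edges at
the left vertices adjacent to `a` or `b` (`link`) and at the remaining ones (`far`) gives an exact
identity. If `u` is the only common neighbour of `a` and `b`, it forces every right vertex to have
all its neighbours in `N(a)` or all in `N(b)`, which saturation at a non-edge `(x, b)` forbids.
Otherwise `a, b` have a second common neighbour `z`; among all such configurations, in both
orientations, take one with `deg z` minimal. The count gives `deg z ≥ |far| + 3`, and it
produces a far vertex that yields a transposed configuration whose last vertex has degree at most
`|far| + 1`.
-/

namespace K23Saturation

section Transpose

variable {V : Type*} {E : Finset (V × V)} {u v : V}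

def transpose (E : Finset (V × V)) : Finset (V × V) := E.map (Equiv.prodComm V V).toEmbedding

@[simp] lemma mem_transpose : (v, u) ∈ transpose E ↔ (u, v) ∈ E := by simp [transpose]

lemma card_transpose : #(transpose E) = #E := card_map _

lemma containsK_transpose {n : ℕ} {E : Finset (Fin n × Fin n)} {s t : ℕ} :
    containsK (transpose E) s t ↔ containsK E t s := by
  constructor <;> rintro ⟨S, T, hS, hT, h⟩ <;>
    exact ⟨T, S, hT, hS, fun x hx y hy => by simpa using h y hy x hx⟩

lemma transpose_insert [DecidableEq V] :
    transpose (insert (u, v) E) = insert (v, u) (transpose E) := by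
  ext ⟨x, y⟩; simp [transpose]

end Transpose

variable {V : Type*} [Fintype V] [DecidableEq V] {E : Finset (V × V)} {u v a b z : V}

def nbrL (E : Finset (V × V)) (u : V) : Finset V := {v | (u, v) ∈ E}

def nbrR (E : Finset (V × V)) (v : V) : Finset V := {u | (u, v) ∈ E}

@[simp] lemma mem_nbrL : v ∈ nbrL E u ↔ (u, v) ∈ E := by simp [nbrL]

@[simp] lemma mem_nbrR : u ∈ nbrR E v ↔ (u, v) ∈ E := by simp [nbrR]

@[simp] lemma nbrL_transpose : nbrL (transpose E) v = nbrR E v := by ext; simp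

@[simp] lemma nbrR_transpose : nbrR (transpose E) u = nbrL E u := by ext; simp

lemma sum_card_nbrL_inter (A B : Finset V) :
    ∑ x ∈ A, #(nbrL E x ∩ B) = ∑ v ∈ B, #(nbrR E v ∩ A) := by
  convert sum_card_bipartiteAbove_eq_sum_card_bipartiteBelow (fun x v => (x, v) ∈ E) using 3 <;>
    ext <;> simp [bipartiteAbove, bipartiteBelow, and_comm]

lemma card_eq_sum_card_nbrL : #E = ∑ x, #(nbrL E x) := by
  simp only [nbrL, card_filter]
  rw [← sum_product' (f := fun x y => if (x, y) ∈ E then 1 else 0), univ_product_univ,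
    ← card_filter]
  simp

/-- Codegree form of `K_{2,3}`-saturation, stated for any vertex type so that it is stable under
`transpose`. -/
structure CodegreeSaturated (E : Finset (V × V)) : Prop where
  card_nbrL_inter_le : ∀ u u', u ≠ u' → #(nbrL E u ∩ nbrL E u') ≤ 2
  card_nbrR_inter_le : ∀ v v', v ≠ v' → #(nbrR E v ∩ nbrR E v') ≤ 2
  of_notMem : ∀ u v, (u, v) ∉ E →
    (∃ u' ∈ nbrR E v, 2 ≤ #(nbrL E u ∩ nbrL E u')) ∨
      ∃ v' ∈ nbrL E u, 2 ≤ #(nbrR E v ∩ nbrR E v')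

lemma CodegreeSaturated.transpose (hE : CodegreeSaturated E) :
    CodegreeSaturated (transpose E) where
  card_nbrL_inter_le v v' h := by simpa using hE.card_nbrR_inter_le v v' h
  card_nbrR_inter_le u u' h := by simpa using hE.card_nbrL_inter_le u u' h
  of_notMem v u h := by simpa [or_comm] using hE.of_notMem u v (by simpa using h)

lemma card_nbrL_inter_le_two {n : ℕ} {E : Finset (Fin n × Fin n)} (hfree : ¬ containsK E 2 3)
    {u u' : Fin n} (h : u ≠ u') : #(nbrL E u ∩ nbrL E u') ≤ 2 := by
  by_contra! hlt
  obtain ⟨T, hT, hTcard⟩ := exists_subset_card_eq hlt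
  refine hfree ⟨{u, u'}, T, card_pair h, hTcard, fun x hx w hw => ?_⟩
  have := hT hw
  simp only [mem_insert, mem_singleton] at hx
  rcases hx with rfl | rfl <;> simp_all

lemma exists_two_le_card_of_containsK_insert {n : ℕ} {E : Finset (Fin n × Fin n)} {u v : Fin n}
    (hfree : ¬ containsK E 2 3) (h : containsK (insert (u, v) E) 2 3) :
    ∃ u' ∈ nbrR E v, 2 ≤ #(nbrL E u ∩ nbrL E u') := by
  obtain ⟨S, T, hS, hT, hST⟩ := h
  have hmem : ∀ x ∈ S, ∀ w ∈ T, x ≠ u ∨ w ≠ v → (x, w) ∈ E := fun x hx w hw hne =>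
    (mem_insert.1 (hST x hx w hw)).resolve_left fun h => by
      obtain ⟨rfl, rfl⟩ := Prod.mk.inj h
      simp at hne
  have huS : u ∈ S := by
    by_contra hu
    exact hfree ⟨S, T, hS, hT, fun x hx w hw =>
      hmem x hx w hw (.inl (ne_of_mem_of_not_mem hx hu))⟩
  have hvT : v ∈ T := by
    by_contra hv
    exact hfree ⟨S, T, hS, hT, fun x hx w hw =>
      hmem x hx w hw (.inr (ne_of_mem_of_not_mem hw hv))⟩
  obtain ⟨u', hu'S, hu'⟩ := exists_mem_ne (by omega : 1 < #S) u
  refine ⟨u', mem_nbrR.2 (hmem u' hu'S v hvT (.inl hu')), ?_⟩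
  calc 2 = #(T.erase v) := by rw [card_erase_of_mem hvT, hT]
    _ ≤ _ := card_le_card fun w hw => by
      have hwv := ne_of_mem_erase hw
      have hwT := mem_of_mem_erase hw
      simp [hmem u huS w hwT (.inr hwv), hmem u' hu'S w hwT (.inr hwv)]

lemma _root_.Saturated.codegreeSaturated {n : ℕ} {E : Finset (Fin n × Fin n)}
    (h : Saturated 2 3 E) : CodegreeSaturated E := by
  have h23 : ¬ containsK E 2 3 := fun h' => h.1 (.inl h')
  have h32 : ¬ containsK (transpose E) 2 3 := fun h' => h.1 (.inr (containsK_transpose.1 h'))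
  refine ⟨fun u u' => card_nbrL_inter_le_two h23, fun v v' hv => ?_, fun u v huv => ?_⟩
  · simpa using card_nbrL_inter_le_two h32 hv
  · rcases h.2 u v huv with h' | h'
    · exact .inl (exists_two_le_card_of_containsK_insert h23 h')
    · rw [← containsK_transpose, transpose_insert] at h'
      right
      simpa using exists_two_le_card_of_containsK_insert h32 h'

lemma CodegreeSaturated.nbrL_nonempty (hE : CodegreeSaturated E) (u : V) :
    (nbrL E u).Nonempty := by
  by_contra! h
  have huu : (u, u) ∉ E := by rw [← mem_nbrL, h]; exact notMem_empty u
  rcases hE.of_notMem u u huu with ⟨u', -, h2⟩ | ⟨v', hv', -⟩ <;> simp_all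

lemma card_eq_card_nbrL_add_sum_add_sum {A : Finset V} (hu : u ∉ A) :
    #E = #(nbrL E u) + ∑ v, #(nbrR E v ∩ A) + ∑ x ∈ (insert u A)ᶜ, #(nbrL E x) := by
  rw [card_eq_sum_card_nbrL, ← sum_add_sum_compl (insert u A), sum_insert hu]
  simpa using sum_card_nbrL_inter (E := E) A univ

/-- Every right vertex `v ≠ w` needs two neighbours among the other neighbours of `w`,
which pays for two edges per right vertex on top of one edge per left vertex. -/
lemma CodegreeSaturated.three_mul_card_le_of_nbrL_eq_singleton (hE : CodegreeSaturated E)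
    {w : V} (hu : nbrL E u = {w}) : 3 * Fintype.card V ≤ #E + 2 := by
  have huY : u ∉ (nbrR E w).erase u := notMem_erase u _
  have hsum := card_eq_card_nbrL_add_sum_add_sum (E := E) huY
  rw [← sum_add_sum_compl {w}, sum_singleton, inter_eq_right.2 (erase_subset u _)] at hsum
  set Y := (nbrR E w).erase u
  have hY : ∀ v ∈ ({w}ᶜ : Finset V), 2 ≤ #(nbrR E v ∩ Y) := by
    intro v hv
    have huv : (u, v) ∉ E := by simpa [← mem_nbrL, hu] using hv
    rcases hE.of_notMem u v huv with ⟨u', -, h2⟩ | ⟨v', hv', h2⟩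
    · rw [hu] at h2
      have := card_le_card (inter_subset_left : {w} ∩ nbrL E u' ⊆ _)
      rw [card_singleton] at this
      omega
    · obtain rfl : v' = w := by simpa [hu] using hv'
      refine h2.trans (card_le_card fun x hx => ?_)
      simp only [mem_inter, mem_nbrR, Y, mem_erase] at hx ⊢
      exact ⟨hx.1, by rintro rfl; exact huv hx.1, hx.2⟩
  have hright := card_nsmul_le_sum _ _ _ hY
  have hleft := card_nsmul_le_sum (insert u Y)ᶜ _ 1 fun x _ => (hE.nbrL_nonempty x).card_pos
  have hcard := card_le_univ (insert u Y)
  simp only [card_compl, card_insert_of_notMem huY, card_singleton, smul_eq_mul,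
    hu] at hright hleft hsum hcard
  omega

lemma CodegreeSaturated.two_le_card_nbrL (hE : CodegreeSaturated E)
    (hlt : #E + 2 < 3 * Fintype.card V) (u : V) : 2 ≤ #(nbrL E u) := by
  by_contra! h
  obtain ⟨w, hw⟩ := card_eq_one.1 (show #(nbrL E u) = 1 by
    have := (hE.nbrL_nonempty u).card_pos; omega)
  exact hlt.not_ge (hE.three_mul_card_le_of_nbrL_eq_singleton hw)

lemma CodegreeSaturated.two_le_card_nbrR (hE : CodegreeSaturated E)
    (hlt : #E + 2 < 3 * Fintype.card V) (v : V) : 2 ≤ #(nbrR E v) := by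
  simpa using hE.transpose.two_le_card_nbrL (by rwa [card_transpose]) v

def link (E : Finset (V × V)) (u a b : V) : Finset V := (nbrR E a ∪ nbrR E b).erase u

lemma card_add_one_eq_of_nbrL_eq_pair (hab : a ≠ b) (hu : nbrL E u = {a, b}) :
    #E + 1 = 2 + #(nbrR E a ∩ nbrR E b) + #(link E u a b) +
      ∑ v ∈ {a, b}ᶜ, #(nbrR E v ∩ link E u a b) +
      ∑ x ∈ (insert u (link E u a b))ᶜ, #(nbrL E x) := by
  have hsum :=
    card_eq_card_nbrL_add_sum_add_sum (E := E) (notMem_erase u (nbrR E a ∪ nbrR E b))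
  rw [← sum_add_sum_compl {a, b}, sum_pair hab] at hsum
  have hua : u ∈ nbrR E a := by simp [← mem_nbrL, hu]
  have hub : u ∈ nbrR E b := by simp [← mem_nbrL, hu]
  have hla : nbrR E a ∩ link E u a b = (nbrR E a).erase u := by ext; simp [link]; tauto
  have hlb : nbrR E b ∩ link E u a b = (nbrR E b).erase u := by ext; simp [link]; tauto
  have hW : #(link E u a b) + 1 = #(nbrR E a ∪ nbrR E b) :=
    card_erase_add_one (mem_union_left _ hua)
  rw [← link, hla, hlb, card_erase_of_mem hua, card_erase_of_mem hub, hu, card_pair hab] at hsum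
  have hunion := card_union_add_card_inter (nbrR E a) (nbrR E b)
  have := card_pos.2 ⟨u, hua⟩
  have := card_pos.2 ⟨u, hub⟩
  omega

lemma CodegreeSaturated.exists_or_two_le_of_nbrL_eq_pair (hE : CodegreeSaturated E)
    (hu : nbrL E u = {a, b}) (hva : v ≠ a) (hvb : v ≠ b) :
    (∃ u' ∈ nbrR E a ∩ nbrR E b, u' ≠ u ∧ (u', v) ∈ E) ∨
      2 ≤ #(nbrR E v ∩ nbrR E a) ∨ 2 ≤ #(nbrR E v ∩ nbrR E b) := by
  have huv : (u, v) ∉ E := by simp [← mem_nbrL, hu, hva, hvb]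
  rcases hE.of_notMem u v huv with ⟨u', hu', h2⟩ | ⟨v', hv', h2⟩
  · rw [hu] at h2
    have hab : {a, b} ⊆ nbrL E u' :=
      inter_eq_left.1 (eq_of_subset_of_card_le inter_subset_left (card_le_two.trans h2))
    rw [mem_nbrR] at hu'
    refine .inl ⟨u', ?_, by rintro rfl; exact huv hu', hu'⟩
    simpa [insert_subset_iff] using hab
  · rw [hu, mem_insert, mem_singleton] at hv'
    rcases hv' with rfl | rfl <;> simp [h2]

lemma CodegreeSaturated.exists_or_two_le_card_inter_link (hE : CodegreeSaturated E)
    (hu : nbrL E u = {a, b}) (hva : v ≠ a) (hvb : v ≠ b) :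
    (∃ u' ∈ nbrR E a ∩ nbrR E b, u' ≠ u ∧ (u', v) ∈ E) ∨
      2 ≤ #(nbrR E v ∩ link E u a b) := by
  have huv : (u, v) ∉ E := by simp [← mem_nbrL, hu, hva, hvb]
  have hsub : ∀ c, c = a ∨ c = b → nbrR E v ∩ nbrR E c ⊆ nbrR E v ∩ link E u a b := by
    rintro c hc x hx
    simp only [mem_inter, mem_nbrR, link, mem_erase, mem_union] at hx ⊢
    refine ⟨hx.1, by rintro rfl; exact huv hx.1, ?_⟩
    rcases hc with rfl | rfl <;> simp [hx.2]
  refine (hE.exists_or_two_le_of_nbrL_eq_pair hu hva hvb).imp id fun h => ?_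
  rcases h with h | h
  · exact h.trans (card_le_card (hsub a (.inl rfl)))
  · exact h.trans (card_le_card (hsub b (.inr rfl)))

lemma CodegreeSaturated.card_nbrR_le_two_of_inter_eq_singleton (hE : CodegreeSaturated E)
    (hab : a ≠ b) (hu : nbrL E u = {a, b}) (hz : nbrR E a ∩ nbrR E b = {u})
    (hlt : #E + 2 < 3 * Fintype.card V) (hva : v ≠ a) (hvb : v ≠ b) : #(nbrR E v) ≤ 2 := by
  have hv : v ∈ ({a, b}ᶜ : Finset V) := by simp [hva, hvb]
  have hid := card_add_one_eq_of_nbrL_eq_pair hab hu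
  rw [hz, card_singleton, ← add_sum_erase _ _ hv] at hid
  set W := link E u a b
  have hf : ∀ w ∈ ({a, b}ᶜ : Finset V), 2 ≤ #(nbrR E w ∩ W) := by
    intro w hw
    simp only [mem_compl, mem_insert, mem_singleton, not_or] at hw
    refine (hE.exists_or_two_le_card_inter_link hu hw.1 hw.2).resolve_left ?_
    rintro ⟨u', hu', hne, -⟩
    exact hne (by simpa [hz] using hu')
  have hright := card_nsmul_le_sum (({a, b}ᶜ : Finset V).erase v) _ _ fun w hw =>
    hf w (mem_of_mem_erase hw)
  have hleft := card_nsmul_le_sum (insert u W)ᶜ _ _ fun x _ => hE.two_le_card_nbrL hlt x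
  have huW : u ∉ W := notMem_erase u _
  have hcard := card_le_univ (insert u W)
  have hB := card_pos.2 ⟨v, hv⟩
  have hfv := hf v hv
  simp only [card_compl, card_insert_of_notMem huW, card_erase_of_mem hv, card_pair hab,
    smul_eq_mul] at hright hleft hcard hB
  have hsub : nbrR E v ⊆ W := by
    intro x hx
    by_contra hxW
    have hx' : x ∈ (insert u W)ᶜ := by
      simp only [mem_compl, mem_insert, hxW, or_false]
      rintro rfl
      simp [← mem_nbrL, hu, hva, hvb] at hx
    have := card_pos.2 ⟨x, hx'⟩
    rw [card_compl, card_insert_of_notMem huW] at this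
    omega
  rw [← inter_eq_left.2 hsub]
  omega

lemma CodegreeSaturated.nbrR_subset_or_subset (hE : CodegreeSaturated E) (hab : a ≠ b)
    (hu : nbrL E u = {a, b}) (hz : nbrR E a ∩ nbrR E b = {u})
    (hlt : #E + 2 < 3 * Fintype.card V) (v : V) :
    nbrR E v ⊆ nbrR E a ∨ nbrR E v ⊆ nbrR E b := by
  by_cases hva : v = a
  · exact .inl (hva ▸ subset_rfl)
  by_cases hvb : v = b
  · exact .inr (hvb ▸ subset_rfl)
  have hle := hE.card_nbrR_le_two_of_inter_eq_singleton hab hu hz hlt hva hvb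
  rcases hE.exists_or_two_le_of_nbrL_eq_pair hu hva hvb with ⟨u', hu', hne, -⟩ | h | h
  · exact absurd (by simpa [hz] using hu') hne
  · exact .inl (inter_eq_left.1 (eq_of_subset_of_card_le inter_subset_left (hle.trans h)))
  · exact .inr (inter_eq_left.1 (eq_of_subset_of_card_le inter_subset_left (hle.trans h)))

/-- Witnessed by saturation at the non-edge `(x, b)`. -/
lemma CodegreeSaturated.exists_nbrR_not_subset (hE : CodegreeSaturated E)
    (hu : nbrL E u = {a, b}) (hz : nbrR E a ∩ nbrR E b = {u}) {x : V} (hx : x ∈ nbrR E a)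
    (hxu : x ≠ u) : ∃ v, ¬ nbrR E v ⊆ nbrR E a ∧ ¬ nbrR E v ⊆ nbrR E b := by
  by_contra! hside
  have hmem : ∀ y, y ∈ nbrR E a → y ∈ nbrR E b → y = u := fun y hya hyb => by
    simpa [hz] using mem_inter.2 ⟨hya, hyb⟩
  have hxb : (x, b) ∉ E := fun h => hxu (hmem x hx (mem_nbrR.2 h))
  rcases hE.of_notMem x b hxb with ⟨u', hu', h2⟩ | ⟨v', hv', h2⟩
  · obtain rfl | hu'u := eq_or_ne u' u
    · rw [hu] at h2
      have : nbrL E x ∩ {a, b} ⊆ {a} := fun w hw => by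
        simp only [mem_inter, mem_nbrL, mem_insert, mem_singleton] at hw ⊢
        rcases hw.2 with rfl | rfl
        · rfl
        · exact absurd hw.1 hxb
      have := card_le_card this
      simp only [card_singleton] at this
      omega
    · obtain ⟨w, hw⟩ := card_pos.1 (by omega : 0 < #(nbrL E x ∩ nbrL E u'))
      simp only [mem_inter, mem_nbrL] at hw
      by_cases hwa : nbrR E w ⊆ nbrR E a
      · exact hu'u (hmem u' (hwa (mem_nbrR.2 hw.2)) hu')
      · exact hxb (mem_nbrR.1 (hside w hwa (mem_nbrR.2 hw.1)))
  · by_cases hva : nbrR E v' ⊆ nbrR E a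
    · have : nbrR E b ∩ nbrR E v' ⊆ {u} := fun y hy => by
        rw [mem_inter] at hy
        exact mem_singleton.2 (hmem y (hva hy.2) hy.1)
      have := card_le_card this
      simp only [card_singleton] at this
      omega
    · exact hxb (mem_nbrR.1 (hside v' hva (mem_nbrR.2 (mem_nbrL.1 hv'))))

lemma CodegreeSaturated.three_mul_card_le_of_inter_eq_singleton (hE : CodegreeSaturated E)
    (hab : a ≠ b) (hu : nbrL E u = {a, b}) (hz : nbrR E a ∩ nbrR E b = {u}) :
    3 * Fintype.card V ≤ #E + 2 := by
  by_contra! hlt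
  obtain ⟨x, hx, hxu⟩ := exists_mem_ne (hE.two_le_card_nbrR hlt a) u
  obtain ⟨v, hva, hvb⟩ := hE.exists_nbrR_not_subset hu hz hx hxu
  exact (hE.nbrR_subset_or_subset hab hu hz hlt v).elim hva hvb

/-- The 4-cycle `u a z b` in which `u` has degree two and `a, b` have no third common neighbour. -/
structure IsQuad (E : Finset (V × V)) (u a b z : V) : Prop where
  right_ne : a ≠ b
  nbrL_eq : nbrL E u = {a, b}
  left_ne : u ≠ z
  inter_eq : nbrR E a ∩ nbrR E b = {u, z}

def far (E : Finset (V × V)) (u a b : V) : Finset V := (insert u (link E u a b))ᶜ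

def sparse (E : Finset (V × V)) (u a b : V) : Finset V :=
  {v ∈ ({a, b}ᶜ : Finset V) | #(nbrR E v ∩ link E u a b) < 2}

namespace IsQuad

lemma mem_nbrR_inter (hq : IsQuad E u a b z) : z ∈ nbrR E a ∩ nbrR E b := by
  simp [hq.inter_eq]

lemma mem_link (hq : IsQuad E u a b z) : z ∈ link E u a b := by
  simp [link, hq.left_ne.symm, (mem_inter.1 hq.mem_nbrR_inter).1]

lemma notMem_far (hq : IsQuad E u a b z) : z ∉ far E u a b := by
  simp [far, hq.mem_link]

lemma mem_of_mem_sparse (hE : CodegreeSaturated E) (hq : IsQuad E u a b z)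
    (hv : v ∈ sparse E u a b) : (z, v) ∈ E := by
  simp only [sparse, mem_filter, mem_compl, mem_insert, mem_singleton, not_or] at hv
  rcases hE.exists_or_two_le_card_inter_link hq.nbrL_eq hv.1.1 hv.1.2 with ⟨u', hu', hne, h⟩ | h
  · rw [hq.inter_eq, mem_insert, mem_singleton] at hu'
    exact hu'.resolve_left hne ▸ h
  · omega

lemma card_nbrR_of_mem_sparse (hE : CodegreeSaturated E) (hq : IsQuad E u a b z)
    (hv : v ∈ sparse E u a b) : #(nbrR E v) = #(nbrR E v ∩ far E u a b) + 1 := by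
  have hz := hq.mem_of_mem_sparse hE hv
  simp only [sparse, mem_filter, mem_compl, mem_insert, mem_singleton, not_or] at hv
  have heq : nbrR E v = insert z (nbrR E v ∩ far E u a b) := by
    refine (insert_subset (mem_nbrR.2 hz) inter_subset_left).antisymm' fun x hx => ?_
    by_cases hxz : x = z
    · exact hxz ▸ mem_insert_self _ _
    refine mem_insert_of_mem (mem_inter.2 ⟨hx, ?_⟩)
    simp only [far, mem_compl, mem_insert, not_or]
    refine ⟨by rintro rfl; simp [← mem_nbrL, hq.nbrL_eq, hv.1] at hx, fun hxW => ?_⟩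
    have : #({x, z} : Finset V) ≤ #(nbrR E v ∩ link E u a b) :=
      card_le_card (insert_subset (mem_inter.2 ⟨hx, hxW⟩)
        (singleton_subset_iff.2 (mem_inter.2 ⟨mem_nbrR.2 hz, hq.mem_link⟩)))
    rw [card_pair hxz] at this
    omega
  rw [heq, card_insert_of_notMem fun h => hq.notMem_far (mem_inter.1 h).2, ← heq]

lemma card_sparse_add_two_le (hE : CodegreeSaturated E) (hq : IsQuad E u a b z) :
    #(sparse E u a b) + 2 ≤ #(nbrL E z) := by
  have hdisj : Disjoint {a, b} (sparse E u a b) :=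
    disjoint_of_subset_right (filter_subset _ _) disjoint_compl_right
  rw [← card_pair hq.right_ne, add_comm, ← card_union_of_disjoint hdisj]
  refine card_le_card (union_subset ?_ fun v hv => mem_nbrL.2 (hq.mem_of_mem_sparse hE hv))
  simpa [insert_subset_iff] using hq.mem_nbrR_inter

/-- In `card_add_one_eq_of_nbrL_eq_pair`, right vertices outside `{a, b}` have two neighbours in
`link`, except sparse ones, which still have `z`. -/
lemma three_mul_card_add_sum_le (hE : CodegreeSaturated E) (hq : IsQuad E u a b z) :
    3 * Fintype.card V + ∑ x ∈ far E u a b, #(nbrL E x) ≤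
      #E + #(sparse E u a b) + #(far E u a b) + 2 := by
  have hid := card_add_one_eq_of_nbrL_eq_pair hq.right_ne hq.nbrL_eq
  rw [hq.inter_eq, card_pair hq.left_ne] at hid
  have hterm : ∀ v ∈ ({a, b}ᶜ : Finset V),
      2 ≤ #(nbrR E v ∩ link E u a b) + if #(nbrR E v ∩ link E u a b) < 2 then 1 else 0 := by
    intro v hv
    split_ifs with h
    · have hz := hq.mem_of_mem_sparse hE (mem_filter.2 ⟨hv, h⟩)
      have := card_pos.2 ⟨z, mem_inter.2 ⟨mem_nbrR.2 hz, hq.mem_link⟩⟩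
      omega
    · omega
  have hright := card_nsmul_le_sum _ _ _ hterm
  rw [sum_add_distrib, ← card_filter] at hright
  have huW : u ∉ link E u a b := notMem_erase u _
  have hcard := card_le_univ (insert u (link E u a b))
  simp only [far, sparse, card_compl, card_insert_of_notMem huW, card_pair hq.right_ne,
    smul_eq_mul] at hright hcard ⊢
  omega

lemma card_nbrR_lt_of_mem_sparse (hE : CodegreeSaturated E) (hq : IsQuad E u a b z)
    (hlt : #E + 2 < 3 * Fintype.card V) {w : V} (hw : w ∈ sparse E u a b) :
    #(nbrR E w) < #(nbrL E z) := by
  have hsum := hq.three_mul_card_add_sum_le hE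
  have hfar := card_nsmul_le_sum (far E u a b) _ _ fun x _ => hE.two_le_card_nbrL hlt x
  have hS := hq.card_sparse_add_two_le hE
  have hw' := card_le_card (inter_subset_right : nbrR E w ∩ far E u a b ⊆ _)
  rw [smul_eq_mul] at hfar
  rw [hq.card_nbrR_of_mem_sparse hE hw]
  omega

lemma exists_mem_far_card_sdiff_lt (hE : CodegreeSaturated E) (hq : IsQuad E u a b z)
    (hlt : #E + 2 < 3 * Fintype.card V) :
    ∃ ρ ∈ far E u a b, #(nbrL E ρ \ sparse E u a b) <
      #(nbrL E ρ ∩ {v ∈ sparse E u a b | #(nbrR E v) = 2}) := by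
  refine exists_lt_of_sum_lt ?_
  have hsum := hq.three_mul_card_add_sum_le hE
  have hfar := card_nsmul_le_sum (far E u a b) _ _ fun x _ => hE.two_le_card_nbrL hlt x
  have hsplit : ∑ ρ ∈ far E u a b, #(nbrL E ρ) =
      ∑ ρ ∈ far E u a b, #(nbrL E ρ ∩ sparse E u a b) +
        ∑ ρ ∈ far E u a b, #(nbrL E ρ \ sparse E u a b) := by
    rw [← sum_add_distrib]
    exact sum_congr rfl fun ρ _ => (card_inter_add_card_sdiff _ _).symm
  have hterm : ∀ v ∈ sparse E u a b,
      2 ≤ #(nbrR E v ∩ far E u a b) + if #(nbrR E v) = 2 then 1 else 0 := by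
    intro v hv
    have := hq.card_nbrR_of_mem_sparse hE hv
    have := hE.two_le_card_nbrR hlt v
    split_ifs <;> omega
  have hS := card_nsmul_le_sum _ _ _ hterm
  rw [sum_add_distrib, ← card_filter] at hS
  have hS2 : ∑ v ∈ sparse E u a b with #(nbrR E v) = 2, #(nbrR E v ∩ far E u a b) =
      #{v ∈ sparse E u a b | #(nbrR E v) = 2} := by
    rw [card_eq_sum_ones]
    refine sum_congr rfl fun v hv => ?_
    rw [mem_filter] at hv
    have := hq.card_nbrR_of_mem_sparse hE hv.1
    omega
  rw [sum_card_nbrL_inter, hS2]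
  rw [sum_card_nbrL_inter] at hsplit
  simp only [smul_eq_mul] at hfar hS
  omega

lemma isQuad_transpose (hE : CodegreeSaturated E) (hq : IsQuad E u a b z) {w ρ : V}
    (hv : v ∈ sparse E u a b) (hv2 : #(nbrR E v) = 2) (hw : w ∈ sparse E u a b) (hvw : v ≠ w)
    (hρ : ρ ∈ far E u a b) (hρv : (ρ, v) ∈ E) (hρw : (ρ, w) ∈ E) :
    IsQuad (transpose E) v z ρ w := by
  have hzρ : z ≠ ρ := by rintro rfl; exact hq.notMem_far hρ
  have hzv := hq.mem_of_mem_sparse hE hv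
  have hzw := hq.mem_of_mem_sparse hE hw
  refine ⟨hzρ, ?_, hvw, ?_⟩
  · rw [nbrL_transpose]
    refine (eq_of_subset_of_card_le ?_ (by rw [hv2, card_pair hzρ])).symm
    simp [insert_subset_iff, hzv, hρv]
  · rw [nbrR_transpose, nbrR_transpose]
    refine (eq_of_subset_of_card_le ?_ ?_).symm
    · simp [insert_subset_iff, hzv, hρv, hzw, hρw]
    · rw [card_pair hvw]
      exact hE.card_nbrL_inter_le z ρ hzρ

/-- The far vertex given by `exists_mem_far_card_sdiff_lt` yields a transposed configuration whose
last vertex is sparse, hence of smaller degree than `z`. -/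
lemma three_mul_card_le_of_minimal (hE : CodegreeSaturated E) (hq : IsQuad E u a b z)
    (hmin : ∀ v x y w, IsQuad (transpose E) v x y w → #(nbrL E z) ≤ #(nbrL (transpose E) w)) :
    3 * Fintype.card V ≤ #E + 2 := by
  by_contra! hlt
  obtain ⟨ρ, hρ, hcount⟩ := hq.exists_mem_far_card_sdiff_lt hE hlt
  obtain ⟨v, hv⟩ :=
    card_pos.1 (by omega : 0 < #(nbrL E ρ ∩ {v ∈ sparse E u a b | #(nbrR E v) = 2}))
  have hS : 1 < #(nbrL E ρ ∩ sparse E u a b) := by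
    have := card_inter_add_card_sdiff (nbrL E ρ) (sparse E u a b)
    have := card_le_card (inter_subset_inter_left (filter_subset _ _) :
      nbrL E ρ ∩ {v ∈ sparse E u a b | #(nbrR E v) = 2} ⊆ nbrL E ρ ∩ sparse E u a b)
    have := hE.two_le_card_nbrL hlt ρ
    omega
  obtain ⟨w, hw, hwv⟩ := exists_mem_ne hS v
  simp only [mem_inter, mem_filter, mem_nbrL] at hv hw
  have := hmin v z ρ w (hq.isQuad_transpose hE hv.2.1 hv.2.2 hw.2 hwv.symm hρ hv.1 hw.1)
  rw [nbrL_transpose] at this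
  exact (hq.card_nbrR_lt_of_mem_sparse hE hlt hw.2).not_ge this

lemma three_mul_card_le (hE : CodegreeSaturated E) (hq : IsQuad E u a b z) :
    3 * Fintype.card V ≤ #E + 2 := by
  induction hk : #(nbrL E z) using Nat.strong_induction_on generalizing E u a b z with
  | _ k ih =>
  by_cases hmin :
      ∀ v x y w, IsQuad (transpose E) v x y w → #(nbrL E z) ≤ #(nbrL (transpose E) w)
  · exact hq.three_mul_card_le_of_minimal hE hmin
  · push Not at hmin
    obtain ⟨v, x, y, w, hq', hlt⟩ := hmin
    simpa [card_transpose] using ih _ (hk ▸ hlt) hE.transpose hq' rfl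

end IsQuad

theorem CodegreeSaturated.three_mul_card_le (hE : CodegreeSaturated E) :
    3 * Fintype.card V ≤ #E + 2 := by
  by_contra! hlt
  obtain ⟨u, hu⟩ : ∃ u, #(nbrL E u) = 2 := by
    by_contra! h
    have := card_nsmul_le_sum univ (fun x => #(nbrL E x)) 3 fun x _ =>
      (hE.two_le_card_nbrL hlt x).lt_of_ne (h x).symm
    rw [← card_eq_sum_card_nbrL, card_univ, smul_eq_mul] at this
    omega
  obtain ⟨a, b, hab, hu⟩ := card_eq_two.1 hu
  have hua : u ∈ nbrR E a ∩ nbrR E b := by simp [← mem_nbrL, hu]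
  by_cases hz : nbrR E a ∩ nbrR E b = {u}
  · exact hlt.not_ge (hE.three_mul_card_le_of_inter_eq_singleton hab hu hz)
  obtain ⟨z, hz, hzu⟩ : ∃ z ∈ nbrR E a ∩ nbrR E b, z ≠ u := by
    by_contra! h
    exact hz (eq_singleton_iff_unique_mem.2 ⟨hua, h⟩)
  have hinter : nbrR E a ∩ nbrR E b = {u, z} :=
    (eq_of_subset_of_card_le (by simp [insert_subset_iff, hua, hz])
      ((hE.card_nbrR_inter_le a b hab).trans_eq (card_pair hzu.symm).symm)).symm
  exact hlt.not_ge (IsQuad.three_mul_card_le hE ⟨hab, hu, hzu.symm, hinter⟩)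

end K23Saturation

theorem stmt4_general (n : ℕ)
    (E : Finset (Fin n × Fin n)) (hsat : Saturated 2 3 E) :
    3 * n - 2 ≤ E.card := by
  have := hsat.codegreeSaturated.three_mul_card_le
  rw [Fintype.card_fin] at this
  omega

theorem stmt4 (n : ℕ) (hn : 4 ≤ n)
    (E : Finset (Fin n × Fin n)) (hsat : Saturated 2 3 E) :
    3 * n - 2 ≤ E.card :=
  stmt4_general n E hsat
end

section
/- If a K_{2,3}-saturated n-by-n bipartite graph (n ≥ 4) contains fewer than 3n-2 edges, then it has minimum degree exactly 2, and moreover there exist non-adjacent vertices u₀ ∈ U and u₀' ∈ U' both of degree 2. -/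
open Finset

/-!
Every vertex of a `K_{2,3}`-saturated graph has a neighbour. If a left vertex `u` had a single
neighbour `w`, then for each `v ≠ w` the copy created by the missing edge `(u, v)` is a `K_{3,2}`
on `{u, x, y} × {v, w}`, so `v` has two neighbours among those of `w`; double counting then gives
at least `3n - 2` edges. Hence few edges force minimum degree `2` on both sides, and a degree
count gives at least three vertices of degree `2` on each side. If these were all adjacent to
each other they would span a `K_{3,2}`.
-/

section

variable {n : ℕ}

section Neighbours

def nbrL (E : Finset (Fin n × Fin n)) (u : Fin n) : Finset (Fin n) :=
  {v | (u, v) ∈ E}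

lemma degL_eq_card_nbrL (E : Finset (Fin n × Fin n)) (u : Fin n) :
    degL E u = #(nbrL E u) := by
  have : E.filter (fun p => p.1 = u) = (nbrL E u).map ⟨(u, ·), Prod.mk_right_injective u⟩ := by
    ext ⟨a, b⟩
    simp only [mem_filter, nbrL, mem_map, mem_univ, true_and, Function.Embedding.coeFn_mk,
      Prod.mk.injEq]
    constructor
    · rintro ⟨h, rfl⟩
      exact ⟨b, h, rfl, rfl⟩
    · rintro ⟨c, h, rfl, rfl⟩
      exact ⟨h, rfl⟩
  rw [degL, this, card_map]

lemma card_eq_sum_degL (E : Finset (Fin n × Fin n)) : #E = ∑ u, degL E u :=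
  card_eq_sum_card_fiberwise fun p _ => mem_univ p.1

lemma sum_degL_eq_sum_card (E : Finset (Fin n × Fin n)) (D : Finset (Fin n)) :
    ∑ x ∈ D, degL E x = ∑ v, #{x ∈ D | (x, v) ∈ E} := by
  simp only [degL_eq_card_nbrL, nbrL, card_filter]
  exact sum_comm

end Neighbours

section Swap

def swapEdges (E : Finset (Fin n × Fin n)) : Finset (Fin n × Fin n) :=
  E.map (Equiv.prodComm (Fin n) (Fin n)).toEmbedding

variable {E : Finset (Fin n × Fin n)}

@[simp]
lemma mem_swapEdges {a b : Fin n} : (a, b) ∈ swapEdges E ↔ (b, a) ∈ E := by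
  simp [swapEdges, mem_map_equiv]

lemma card_swapEdges : #(swapEdges E) = #E :=
  card_map _

lemma swapEdges_insert (u v : Fin n) :
    swapEdges (insert (u, v) E) = insert (v, u) (swapEdges E) := by
  simp [swapEdges, map_insert]

lemma containsK_swapEdges {a b : ℕ} : containsK (swapEdges E) a b ↔ containsK E b a := by
  constructor
  · rintro ⟨S, T, hS, hT, h⟩
    exact ⟨T, S, hT, hS, fun v hv u hu => mem_swapEdges.1 (h u hu v hv)⟩
  · rintro ⟨S, T, hS, hT, h⟩
    exact ⟨T, S, hT, hS, fun v hv u hu => mem_swapEdges.2 (h u hu v hv)⟩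

lemma Saturated.swapEdges {s t : ℕ} (h : Saturated s t E) : Saturated s t (swapEdges E) := by
  refine ⟨?_, fun u v huv => ?_⟩
  · rw [containsK_swapEdges, containsK_swapEdges]
    exact fun hc => h.1 hc.symm
  · rw [← swapEdges_insert, containsK_swapEdges, containsK_swapEdges]
    exact (h.2 v u (mem_swapEdges.not.1 huv)).symm

lemma degL_swapEdges (v : Fin n) : degL (swapEdges E) v = degR E v := by
  rw [degL, degR, swapEdges, filter_map, card_map]
  rfl

end Swap

section Copies

lemma containsK_of_forall_mem {E : Finset (Fin n × Fin n)} {A B : Finset (Fin n)} {a b : ℕ}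
    (ha : a ≤ #A) (hb : b ≤ #B) (h : ∀ x ∈ A, ∀ y ∈ B, (x, y) ∈ E) : containsK E a b := by
  obtain ⟨S, hSA, hS⟩ := exists_subset_card_eq ha
  obtain ⟨T, hTB, hT⟩ := exists_subset_card_eq hb
  exact ⟨S, T, hS, hT, fun x hx y hy => h x (hSA hx) y (hTB hy)⟩

lemma exists_copy_through_of_containsK_insert {E : Finset (Fin n × Fin n)} {u v : Fin n}
    {a b : ℕ} (hfree : ¬ containsK E a b) (h : containsK (insert (u, v) E) a b) :
    ∃ S T : Finset (Fin n), #S = a ∧ #T = b ∧ u ∈ S ∧ v ∈ T ∧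
      ∀ x ∈ S, ∀ y ∈ T, (x, y) ≠ (u, v) → (x, y) ∈ E := by
  obtain ⟨S, T, hS, hT, hST⟩ := h
  have hE : ∀ x ∈ S, ∀ y ∈ T, (x, y) ≠ (u, v) → (x, y) ∈ E :=
    fun x hx y hy hne => (mem_insert.1 (hST x hx y hy)).resolve_left hne
  refine ⟨S, T, hS, hT, ?_, ?_, hE⟩ <;> by_contra hnot <;>
    exact hfree ⟨S, T, hS, hT, fun x hx y hy =>
      hE x hx y hy fun h => hnot (by simp only [Prod.mk.injEq] at h; simp_all)⟩

variable {s t : ℕ} {E : Finset (Fin n × Fin n)}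

lemma Saturated.exists_copy_of_not_mem (hsat : Saturated s t E) {u v : Fin n}
    (huv : (u, v) ∉ E) :
    ∃ S T : Finset (Fin n), ((#S = s ∧ #T = t) ∨ (#S = t ∧ #T = s)) ∧ u ∈ S ∧ v ∈ T ∧
      T ⊆ insert v (nbrL E u) ∧ ∀ x ∈ S.erase u, ∀ y ∈ T, (x, y) ∈ E := by
  have key : ∀ S T : Finset (Fin n), u ∈ S → v ∈ T →
      (∀ x ∈ S, ∀ y ∈ T, (x, y) ≠ (u, v) → (x, y) ∈ E) →
      T ⊆ insert v (nbrL E u) ∧ ∀ x ∈ S.erase u, ∀ y ∈ T, (x, y) ∈ E := by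
    intro S T huS _ hE
    refine ⟨fun y hy => ?_, fun x hx y hy => hE x (mem_of_mem_erase hx) y hy ?_⟩
    · by_cases hyv : y = v
      · simp [hyv]
      · exact mem_insert_of_mem (by simpa [nbrL] using hE u huS y hy (by simp [hyv]))
    · simp [ne_of_mem_erase hx]
  rcases hsat.2 u v huv with h | h
  · obtain ⟨S, T, hS, hT, huS, hvT, hE⟩ :=
      exists_copy_through_of_containsK_insert (fun hc => hsat.1 (Or.inl hc)) h
    exact ⟨S, T, Or.inl ⟨hS, hT⟩, huS, hvT, key S T huS hvT hE⟩
  · obtain ⟨S, T, hS, hT, huS, hvT, hE⟩ :=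
      exists_copy_through_of_containsK_insert (fun hc => hsat.1 (Or.inr hc)) h
    exact ⟨S, T, Or.inr ⟨hS, hT⟩, huS, hvT, key S T huS hvT hE⟩

lemma Saturated.one_le_degL (hs : 2 ≤ s) (ht : 2 ≤ t) (hsat : Saturated s t E) (u : Fin n) :
    1 ≤ degL E u := by
  rw [degL_eq_card_nbrL, Nat.one_le_iff_ne_zero, Ne, card_eq_zero]
  intro h0
  have huu : (u, u) ∉ E := by simpa [nbrL] using (Finset.ext_iff.1 h0 u)
  obtain ⟨S, T, hcard, -, -, hT, -⟩ := hsat.exists_copy_of_not_mem huu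
  have : #T ≤ 1 := by simpa [h0] using card_le_card hT
  omega

end Copies

variable {E : Finset (Fin n × Fin n)}

lemma Saturated.two_le_card_common_nbrs (hsat : Saturated 2 3 E) {u w v : Fin n}
    (hu : nbrL E u = {w}) (hvw : v ≠ w) : 2 ≤ #{x | (x, w) ∈ E ∧ (x, v) ∈ E} := by
  have huv : (u, v) ∉ E := by
    have : v ∉ nbrL E u := by simp [hu, hvw]
    simpa [nbrL] using this
  obtain ⟨S, T, hcard, huS, hvT, hT, hST⟩ := hsat.exists_copy_of_not_mem huv
  rw [hu] at hT
  have hvw2 : #({v, w} : Finset (Fin n)) ≤ 2 := card_insert_le _ _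
  have hT2 : #T = 2 ∧ #S = 3 := by have := card_le_card hT; omega
  have hwT : w ∈ T := by
    rw [eq_of_subset_of_card_le hT (by omega)]
    exact mem_insert_of_mem (mem_singleton_self w)
  have hS : #(S.erase u) = 2 := by rw [card_erase_of_mem huS]; omega
  rw [← hS]
  exact card_le_card fun x hx => by simpa using And.intro (hST x hx w hwT) (hST x hx v hvT)

lemma Saturated.three_mul_sub_two_le_card_of_degL_eq_one (hsat : Saturated 2 3 E) {u : Fin n}
    (hu : degL E u = 1) : 3 * n - 2 ≤ #E := by
  rw [degL_eq_card_nbrL, card_eq_one] at hu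
  obtain ⟨w, hw⟩ := hu
  set D : Finset (Fin n) := {x | (x, w) ∈ E}
  have hD : #D + 2 * (n - 1) ≤ ∑ x ∈ D, degL E x := by
    rw [sum_degL_eq_sum_card, ← add_sum_erase _ _ (mem_univ w)]
    have hcol : ∀ v ∈ univ.erase w, 2 ≤ #{x ∈ D | (x, v) ∈ E} := fun v hv => by
      simpa only [D, filter_filter] using hsat.two_le_card_common_nbrs hw (ne_of_mem_erase hv)
    have hsum := card_nsmul_le_sum _ _ 2 hcol
    rw [card_erase_of_mem (mem_univ w), card_univ, Fintype.card_fin, smul_eq_mul] at hsum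
    have hw : {x ∈ D | (x, w) ∈ E} = D := filter_true_of_mem fun x hx => (mem_filter.1 hx).2
    rw [hw]
    omega
  have hDc : #Dᶜ ≤ ∑ x ∈ Dᶜ, degL E x := by
    simpa using card_nsmul_le_sum Dᶜ (degL E) 1
      fun x _ => hsat.one_le_degL le_rfl (by norm_num) x
  have hcard : #D + #Dᶜ = n := by rw [card_add_card_compl, Fintype.card_fin]
  rw [card_eq_sum_degL, ← sum_add_sum_compl D]
  omega

lemma Saturated.two_le_degL (hsat : Saturated 2 3 E) (hfew : #E < 3 * n - 2) (u : Fin n) :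
    2 ≤ degL E u := by
  have := hsat.one_le_degL le_rfl (by norm_num) u
  by_contra h
  have := hsat.three_mul_sub_two_le_card_of_degL_eq_one (by omega : degL E u = 1)
  omega

lemma three_mul_le_card_add_card_degL_eq_two (h : ∀ u, 2 ≤ degL E u) :
    3 * n ≤ #E + #{u | degL E u = 2} := by
  calc 3 * n = ∑ _u : Fin n, 3 := by simp [mul_comm]
    _ ≤ ∑ u, (degL E u + if degL E u = 2 then 1 else 0) := by
        gcongr with u
        have := h u
        split_ifs <;> omega
    _ = #E + #{u | degL E u = 2} := by rw [sum_add_distrib, card_eq_sum_degL, sum_boole]; rfl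

lemma Saturated.three_le_card_degL_eq_two (hsat : Saturated 2 3 E) (hfew : #E < 3 * n - 2) :
    3 ≤ #{u | degL E u = 2} := by
  have := three_mul_le_card_add_card_degL_eq_two (hsat.two_le_degL hfew)
  omega

end

theorem stmt5_general (n : ℕ)
    (E : Finset (Fin n × Fin n)) (hsat : Saturated 2 3 E)
    (hfew : E.card < 3 * n - 2) :
    (∀ u : Fin n, 2 ≤ degL E u) ∧ (∀ v : Fin n, 2 ≤ degR E v) ∧
      ∃ u₀ v₀ : Fin n, (u₀, v₀) ∉ E ∧ degL E u₀ = 2 ∧ degR E v₀ = 2 := by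
  have hsat' := hsat.swapEdges
  have hfew' : #(swapEdges E) < 3 * n - 2 := by rwa [card_swapEdges]
  refine ⟨hsat.two_le_degL hfew,
    fun v => degL_swapEdges (E := E) v ▸ hsat'.two_le_degL hfew' v, ?_⟩
  by_contra! h
  have hA := hsat.three_le_card_degL_eq_two hfew
  have hB := hsat'.three_le_card_degL_eq_two hfew'
  simp only [degL_swapEdges] at hB
  refine hsat.1 (Or.inr (containsK_of_forall_mem hA (Nat.le_of_succ_le hB) fun x hx y hy => ?_))
  by_contra hxy
  exact h x y hxy (mem_filter.1 hx).2 (mem_filter.1 hy).2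

theorem stmt5 (n : ℕ) (hn : 4 ≤ n)
    (E : Finset (Fin n × Fin n)) (hsat : Saturated 2 3 E)
    (hfew : E.card < 3 * n - 2) :
    (∀ u : Fin n, 2 ≤ degL E u) ∧ (∀ v : Fin n, 2 ≤ degR E v) ∧
      ∃ u₀ v₀ : Fin n, (u₀, v₀) ∉ E ∧ degL E u₀ = 2 ∧ degR E v₀ = 2 :=
  stmt5_general n E hsat hfew
end

section
/- Let G be a K_{s,t}-saturated bipartite graph with parts U, U' and define, for subsets A ⊆ U, A' ⊆ U': B₂' = vertices of U'-A' with at least s-1 but fewer than t-1 neighbors in A and fewer than t-s neighbors in B (where B is defined analogously on the U side, and B₂ ⊆ B is the set of vertices of B with fewer than t-s neighbors in B'), C₂ ⊆ U-A the set of vertices with fewer than s-1 neighbors in A' and fewer than s-1 neighbors outside B₂', and C₂' defined symmetrically. Then every vertex of C₂ is adjacent to every vertex of C₂'. -/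
/-!
Suppose `uv` is a non-edge with `u ∈ C₂`, `v ∈ C₂'`. By saturation, `uv` completes a copy of
`K_{s,t}`; say `u` lies on its `s`-side `S` and `v` on its `t`-side `T`. The `s - 1` vertices of
`S - u` are neighbours of `v`, which has fewer than `s - 1` neighbours outside `B₂`, so one of
them, `w`, lies in `B₂`. The `t - 1` vertices of `T - v` are neighbours of `u`, fewer than
`s - 1` of which lie outside `B₂'`; so more than `t - s` of them lie in `B₂' ⊆ B'`, and all are
neighbours of `w`, contradicting `w ∈ B₂`. The other orientation is the same argument with the
two sides exchanged.
-/

open Finset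

def IsBicliqueOff {α β : Type*} (r : α → β → Prop) (S : Finset α) (T : Finset β)
    (u : α) (v : β) : Prop :=
  ∀ a ∈ S, ∀ b ∈ T, a ≠ u ∨ b ≠ v → r a b

theorem IsBicliqueOff.swap {α β : Type*} {r : α → β → Prop} {S : Finset α} {T : Finset β}
    {u : α} {v : β} (h : IsBicliqueOff r S T u v) : IsBicliqueOff (flip r) T S v u :=
  fun b hb a ha hne => h a ha b hb hne.symm

theorem exists_isBicliqueOff_of_containsK_insert {n a b : ℕ} {E : Finset (Fin n × Fin n)}
    {u v : Fin n} (hfree : ¬ containsK E a b) (h : containsK (insert (u, v) E) a b) :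
    ∃ S T : Finset (Fin n), S.card = a ∧ T.card = b ∧ u ∈ S ∧ v ∈ T ∧
      IsBicliqueOff (fun x y => (x, y) ∈ E) S T u v := by
  obtain ⟨S, T, hS, hT, hST⟩ := h
  have hoff : IsBicliqueOff (fun x y => (x, y) ∈ E) S T u v := fun x hx y hy hne =>
    (mem_insert.mp (hST x hx y hy)).resolve_left fun h => by
      obtain ⟨rfl, rfl⟩ := Prod.mk.inj h
      simp at hne
  by_cases huv : u ∈ S ∧ v ∈ T
  · exact ⟨S, T, hS, hT, huv.1, huv.2, hoff⟩
  · refine absurd ⟨S, T, hS, hT, fun x hx y hy => hoff x hx y hy ?_⟩ hfree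
    by_contra! h
    exact huv ⟨h.1 ▸ hx, h.2 ▸ hy⟩

theorem card_filter_notMem_le_of_forall {α : Type*} [Fintype α] [DecidableEq α]
    {p : α → Prop} [DecidablePred p] {W : Finset α} (X : Finset α) (h : ∀ a ∈ W, p a) :
    (W.filter (· ∉ X)).card ≤ ((univ \ X).filter p).card :=
  card_le_card fun a ha => by
    rw [mem_filter] at ha
    simp [ha.2, h a ha.1]

theorem not_isBicliqueOff {α β : Type*} [Fintype α] [Fintype β] [DecidableEq α]
    [DecidableEq β] {r : α → β → Prop} [DecidableRel r] {s t : ℕ} {S : Finset α}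
    {T : Finset β} {u : α} {v : β} (hS : S.card = s) (hT : T.card = t) (hu : u ∈ S)
    (hv : v ∈ T) {B₂ : Finset α} {B' B₂' : Finset β} (hB₂' : B₂' ⊆ B')
    (hB₂ : ∀ w ∈ B₂, (B'.filter (r w)).card < t - s)
    (hu_out : ((univ \ B₂').filter (r u)).card < s - 1)
    (hv_out : ((univ \ B₂).filter (r · v)).card < s - 1) :
    ¬ IsBicliqueOff r S T u v := by
  intro hST
  have hSv : ∀ a ∈ S.erase u, r a v := fun a ha =>
    hST a (mem_of_mem_erase ha) v hv (.inl (ne_of_mem_erase ha))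
  have huT : ∀ b ∈ T.erase v, r u b := fun b hb =>
    hST u hu b (mem_of_mem_erase hb) (.inr (ne_of_mem_erase hb))
  obtain ⟨w, hw⟩ : ((S.erase u).filter (· ∈ B₂)).Nonempty := by
    have hsplit := card_filter_add_card_filter_not (s := S.erase u) (· ∈ B₂)
    have hout := (card_filter_notMem_le_of_forall B₂ hSv).trans_lt hv_out
    rw [card_erase_of_mem hu, hS] at hsplit
    rw [← card_pos]
    omega
  obtain ⟨hwS, hwB₂⟩ := mem_filter.mp hw
  have h_in : ((T.erase v).filter (· ∈ B₂')).card < t - s := by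
    refine (card_le_card fun b hb => ?_).trans_lt (hB₂ w hwB₂)
    obtain ⟨hbT, hbB₂'⟩ := mem_filter.mp hb
    exact mem_filter.mpr ⟨hB₂' hbB₂',
      hST w (mem_of_mem_erase hwS) b (mem_of_mem_erase hbT) (.inl (ne_of_mem_erase hwS))⟩
  have h_out := (card_filter_notMem_le_of_forall B₂' huT).trans_lt hu_out
  have hsplit := card_filter_add_card_filter_not (s := T.erase v) (· ∈ B₂')
  rw [card_erase_of_mem hv, hT] at hsplit
  omega

theorem stmt8_general (n s t : ℕ)
    (E : Finset (Fin n × Fin n)) (hsat : Saturated s t E)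
    (A A' : Finset (Fin n))
    (B B' B₂ B₂' C₂ C₂' : Finset (Fin n))
    (hB₂ : B₂ = B.filter fun u => (B'.filter fun v => (u, v) ∈ E).card < t - s)
    (hB₂' : B₂' = B'.filter fun v => (B.filter fun u => (u, v) ∈ E).card < t - s)
    (hC₂ : C₂ = ((univ \ A) \ B).filter fun u =>
      ((univ \ B₂').filter fun v => (u, v) ∈ E).card < s - 1)
    (hC₂' : C₂' = ((univ \ A') \ B').filter fun v =>
      ((univ \ B₂).filter fun u => (u, v) ∈ E).card < s - 1) :
    ∀ u ∈ C₂, ∀ v ∈ C₂', (u, v) ∈ E := by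
  subst hB₂ hB₂' hC₂ hC₂'
  intro u hu v hv
  by_contra huv
  obtain ⟨-, hu_out⟩ := mem_filter.mp hu
  obtain ⟨-, hv_out⟩ := mem_filter.mp hv
  rcases hsat.2 u v huv with h | h
  · obtain ⟨S, T, hS, hT, huS, hvT, hST⟩ :=
      exists_isBicliqueOff_of_containsK_insert (fun h' => hsat.1 (.inl h')) h
    exact not_isBicliqueOff hS hT huS hvT (filter_subset _ _) (fun w hw => (mem_filter.mp hw).2)
      hu_out hv_out hST
  · obtain ⟨S, T, hS, hT, huS, hvT, hST⟩ :=
      exists_isBicliqueOff_of_containsK_insert (fun h' => hsat.1 (.inr h')) h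
    exact not_isBicliqueOff hT hS hvT huS (filter_subset _ _) (fun w hw => (mem_filter.mp hw).2)
      hv_out hu_out hST.swap

theorem stmt8 (n s t : ℕ) (hs : 1 ≤ s) (hst : s ≤ t)
    (E : Finset (Fin n × Fin n)) (hsat : Saturated s t E)
    (A A' : Finset (Fin n))
    (hshellL : ∀ u : Fin n, u ∉ A → (A'.filter fun v => (u, v) ∈ E).card < t - 1)
    (hshellR : ∀ v : Fin n, v ∉ A' → (A.filter fun u => (u, v) ∈ E).card < t - 1)
    (B B' B₂ B₂' C₂ C₂' : Finset (Fin n))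
    (hB : B = (univ \ A).filter fun u => s - 1 ≤ (A'.filter fun v => (u, v) ∈ E).card)
    (hB' : B' = (univ \ A').filter fun v => s - 1 ≤ (A.filter fun u => (u, v) ∈ E).card)
    (hB₂ : B₂ = B.filter fun u => (B'.filter fun v => (u, v) ∈ E).card < t - s)
    (hB₂' : B₂' = B'.filter fun v => (B.filter fun u => (u, v) ∈ E).card < t - s)
    (hC₂ : C₂ = ((univ \ A) \ B).filter fun u =>
      ((univ \ B₂').filter fun v => (u, v) ∈ E).card < s - 1)
    (hC₂' : C₂' = ((univ \ A') \ B').filter fun v =>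
      ((univ \ B₂).filter fun u => (u, v) ∈ E).card < s - 1) :
    ∀ u ∈ C₂, ∀ v ∈ C₂', (u, v) ∈ E :=
  stmt8_general n s t E hsat A A' B B' B₂ B₂' C₂ C₂' hB₂ hB₂' hC₂ hC₂'
end

section
/- The following construction yields a K_{s,t}-saturated n-by-n bipartite graph with exactly (s+t-2)n - ⌊((s+t-2)/2)²⌋ edges: partition U = V ∪ W and U' = V' ∪ W' with |V| = |V'| = ⌊(s+t-2)/2⌋; partition W = W₁ ∪ ... ∪ W_l and W' = W₁' ∪ ... ∪ W_l' with |W_i| = |W_i'| ≥ t-s; include all edges between V and V'; between each W_i and W_i' include a (t-s)-regular bipartite graph; choose S' ⊆ V' of size s-1 and S_i ⊆ V of size s-1 for each i; include all edges between W_i and S' and between S_i and W_i'; no other edges. Then the resulting graph is K_{s,t}-saturated, i.e., adding any missing edge between U and U' creates a copy of K_{s,t}. -/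
/-!
Every missing edge `uv` is completed to a `K_{s,t}` by the sets attached to its ends. Each left
vertex is joined to `S'`. If `u ∈ W_i` and `v ∈ V'`, take `{u} ∪ S_i` against `{v} ∪ S' ∪ N(u)`,
where `N(u)` is the set of the `t - s` neighbours of `u` in `W_i'`. If `v ∈ W_j'`, take
`{u} ∪ S_j ∪ N(v)` against `{v} ∪ S'`, which is a `K_{t,s}`.
-/

open Finset

lemma containsK_insert_of_join {n a b : ℕ} {E : Finset (Fin n × Fin n)} {u v : Fin n}
    {A B : Finset (Fin n)} (hu : u ∉ A) (hv : v ∉ B) (hA : A.card + 1 = a) (hB : B.card + 1 = b)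
    (hAB : ∀ x ∈ A, ∀ y ∈ B, (x, y) ∈ E) (huB : ∀ y ∈ B, (u, y) ∈ E)
    (hAv : ∀ x ∈ A, (x, v) ∈ E) :
    containsK (insert (u, v) E) a b := by
  refine ⟨insert u A, insert v B, by rw [card_insert_of_notMem hu, hA],
    by rw [card_insert_of_notMem hv, hB], ?_⟩
  intro x hx y hy
  rcases mem_insert.1 hx with rfl | hxA <;> rcases mem_insert.1 hy with rfl | hyB
  · exact mem_insert_self _ _
  · exact mem_insert_of_mem (huB y hyB)
  · exact mem_insert_of_mem (hAv x hxA)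
  · exact mem_insert_of_mem (hAB x hxA y hyB)

lemma mem_or_exists_mem_of_union_biUnion_eq_univ {α ι : Type*} [Fintype α] [Fintype ι]
    [DecidableEq α] {V : Finset α} {P : ι → Finset α} (h : V ∪ univ.biUnion P = univ) (x : α) :
    x ∈ V ∨ ∃ i, x ∈ P i := by
  have hx : x ∈ V ∪ univ.biUnion P := h ▸ mem_univ x
  simpa using hx

section Completion

variable {n s t : ℕ} {E : Finset (Fin n × Fin n)} {V V' P P' S S' : Finset (Fin n)}
  {u v : Fin n}

lemma containsK_insert_block_core (hs : 1 ≤ s) (hst : s ≤ t)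
    (hVP : Disjoint V P) (hV'P' : Disjoint V' P')
    (hS : S ⊆ V) (hS' : S' ⊆ V') (hScard : S.card = s - 1) (hS'card : S'.card = s - 1)
    (hVV' : ∀ x ∈ V, ∀ y ∈ V', (x, y) ∈ E) (hSP' : ∀ x ∈ S, ∀ y ∈ P', (x, y) ∈ E)
    (hu : u ∈ P) (hv : v ∈ V') (huS' : ∀ y ∈ S', (u, y) ∈ E) (huv : (u, v) ∉ E)
    (hdeg : (P'.filter fun y => (u, y) ∈ E).card = t - s) :
    containsK (insert (u, v) E) s t := by
  set N := P'.filter fun y => (u, y) ∈ E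
  have hS'N : Disjoint S' N :=
    (hV'P'.mono_left hS').mono_right (filter_subset _ _)
  have hvS' : v ∉ S' := fun h => huv (huS' v h)
  have hvN : v ∉ N := fun h => huv (mem_filter.1 h).2
  refine containsK_insert_of_join (A := S) (B := S' ∪ N)
    (fun h => disjoint_left.1 hVP (hS h) hu) (by simp [hvS', hvN]) (by omega)
    (by rw [card_union_of_disjoint hS'N]; omega) ?_ ?_ (fun x hx => hVV' x (hS hx) v hv)
  · intro x hx y hy
    rcases mem_union.1 hy with hy | hy
    · exact hVV' x (hS hx) y (hS' hy)
    · exact hSP' x hx y (mem_filter.1 hy).1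
  · intro y hy
    rcases mem_union.1 hy with hy | hy
    · exact huS' y hy
    · exact (mem_filter.1 hy).2

lemma containsK_insert_to_block (hs : 1 ≤ s) (hst : s ≤ t)
    (hVP : Disjoint V P) (hV'P' : Disjoint V' P')
    (hS : S ⊆ V) (hS' : S' ⊆ V') (hScard : S.card = s - 1) (hS'card : S'.card = s - 1)
    (hVV' : ∀ x ∈ V, ∀ y ∈ V', (x, y) ∈ E) (hSP' : ∀ x ∈ S, ∀ y ∈ P', (x, y) ∈ E)
    (hPS' : ∀ x ∈ P, ∀ y ∈ S', (x, y) ∈ E)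
    (hv : v ∈ P') (huS' : ∀ y ∈ S', (u, y) ∈ E) (huv : (u, v) ∉ E)
    (hdeg : (P.filter fun x => (x, v) ∈ E).card = t - s) :
    containsK (insert (u, v) E) t s := by
  set N := P.filter fun x => (x, v) ∈ E
  have hSN : Disjoint S N := (hVP.mono_left hS).mono_right (filter_subset _ _)
  have huS : u ∉ S := fun h => huv (hSP' u h v hv)
  have huN : u ∉ N := fun h => huv (mem_filter.1 h).2
  refine containsK_insert_of_join (A := S ∪ N) (B := S') (by simp [huS, huN])
    (fun h => disjoint_left.1 hV'P' (hS' h) hv)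
    (by rw [card_union_of_disjoint hSN]; omega) (by omega) ?_ huS' ?_
  · intro x hx y hy
    rcases mem_union.1 hx with hx | hx
    · exact hVV' x (hS hx) y (hS' hy)
    · exact hPS' x (mem_filter.1 hx).1 y hy
  · intro x hx
    rcases mem_union.1 hx with hx | hx
    · exact hSP' x hx v hv
    · exact (mem_filter.1 hx).2

end Completion

theorem stmt12_general (n s t l : ℕ) (hs : 1 ≤ s) (hst : s ≤ t)
    (E : Finset (Fin n × Fin n))
    (V W V' W' : Finset (Fin n))
    (Wp Wp' : Fin l → Finset (Fin n))
    (S' : Finset (Fin n)) (Si : Fin l → Finset (Fin n))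
    (hVW : Disjoint V W) (hVWu : V ∪ W = univ)
    (hVW' : Disjoint V' W') (hVWu' : V' ∪ W' = univ)
    (hWu : univ.biUnion Wp = W) (hWu' : univ.biUnion Wp' = W')
    (hS'sub : S' ⊆ V') (hS'c : S'.card = s - 1)
    (hSisub : ∀ i, Si i ⊆ V) (hSic : ∀ i, (Si i).card = s - 1)
    (hE1 : ∀ u ∈ V, ∀ v ∈ V', (u, v) ∈ E)
    (hE2 : ∀ i, ∀ u ∈ Wp i, ∀ v ∈ S', (u, v) ∈ E)
    (hE3 : ∀ i, ∀ u ∈ Si i, ∀ v ∈ Wp' i, (u, v) ∈ E)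
    (hreg1 : ∀ i, ∀ u ∈ Wp i, ((Wp' i).filter fun v => (u, v) ∈ E).card = t - s)
    (hreg2 : ∀ i, ∀ v ∈ Wp' i, ((Wp i).filter fun u => (u, v) ∈ E).card = t - s) :
    ∀ u v : Fin n, (u, v) ∉ E →
      containsK (insert (u, v) E) s t ∨ containsK (insert (u, v) E) t s := by
  intro u v huv
  subst hWu hWu'
  have hVWp i : Disjoint V (Wp i) := hVW.mono_right (subset_biUnion_of_mem Wp (mem_univ i))
  have hVWp' i : Disjoint V' (Wp' i) := hVW'.mono_right (subset_biUnion_of_mem Wp' (mem_univ i))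
  have hleft := mem_or_exists_mem_of_union_biUnion_eq_univ hVWu u
  have huS' : ∀ y ∈ S', (u, y) ∈ E := by
    rcases hleft with huV | ⟨i, hui⟩
    · exact fun y hy => hE1 u huV y (hS'sub hy)
    · exact hE2 i u hui
  rcases mem_or_exists_mem_of_union_biUnion_eq_univ hVWu' v with hvV | ⟨j, hvj⟩
  · rcases hleft with huV | ⟨i, hui⟩
    · exact absurd (hE1 u huV v hvV) huv
    · exact Or.inl <| containsK_insert_block_core hs hst (hVWp i) (hVWp' i) (hSisub i) hS'sub
        (hSic i) hS'c hE1 (hE3 i) hui hvV huS' huv (hreg1 i u hui)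
  · exact Or.inr <| containsK_insert_to_block hs hst (hVWp j) (hVWp' j) (hSisub j) hS'sub
      (hSic j) hS'c hE1 (hE3 j) (hE2 j) hvj huS' huv (hreg2 j v hvj)

theorem stmt12 (n s t l : ℕ) (hs : 1 ≤ s) (hst : s ≤ t)
    (E : Finset (Fin n × Fin n))
    (V W V' W' : Finset (Fin n))
    (Wp Wp' : Fin l → Finset (Fin n))
    (S' : Finset (Fin n)) (Si : Fin l → Finset (Fin n))
    (hVW : Disjoint V W) (hVWu : V ∪ W = univ)
    (hVW' : Disjoint V' W') (hVWu' : V' ∪ W' = univ)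
    (hV : V.card = (s + t - 2) / 2) (hV' : V'.card = (s + t - 2) / 2)
    (hWdisj : ∀ i j, i ≠ j → Disjoint (Wp i) (Wp j))
    (hWdisj' : ∀ i j, i ≠ j → Disjoint (Wp' i) (Wp' j))
    (hWu : univ.biUnion Wp = W) (hWu' : univ.biUnion Wp' = W')
    (hWc : ∀ i, (Wp i).card = (Wp' i).card)
    (hWsize : ∀ i, t - s ≤ (Wp i).card)
    (hS'sub : S' ⊆ V') (hS'c : S'.card = s - 1)
    (hSisub : ∀ i, Si i ⊆ V) (hSic : ∀ i, (Si i).card = s - 1)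
    (hE1 : ∀ u ∈ V, ∀ v ∈ V', (u, v) ∈ E)
    (hE2 : ∀ i, ∀ u ∈ Wp i, ∀ v ∈ S', (u, v) ∈ E)
    (hE3 : ∀ i, ∀ u ∈ Si i, ∀ v ∈ Wp' i, (u, v) ∈ E)
    (hreg1 : ∀ i, ∀ u ∈ Wp i, ((Wp' i).filter fun v => (u, v) ∈ E).card = t - s)
    (hreg2 : ∀ i, ∀ v ∈ Wp' i, ((Wp i).filter fun u => (u, v) ∈ E).card = t - s)
    (hE4 : ∀ u v : Fin n, (u, v) ∈ E →
      (u ∈ V ∧ v ∈ V') ∨ ∃ i, (u ∈ Wp i ∧ v ∈ Wp' i) ∨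
        (u ∈ Wp i ∧ v ∈ S') ∨ (u ∈ Si i ∧ v ∈ Wp' i)) :
    ∀ u v : Fin n, (u, v) ∉ E →
      containsK (insert (u, v) E) s t ∨ containsK (insert (u, v) E) t s :=
  stmt12_general n s t l hs hst E V W V' W' Wp Wp' S' Si hVW hVWu hVW' hVWu' hWu hWu' hS'sub hS'c
    hSisub hSic hE1 hE2 hE3 hreg1 hreg2
end

section
/- The graph from the Moshkovitz–Shapira-type construction has exactly (s+t-2)n - ⌊((s+t-2)/2)²⌋ edges. -/
/-!
Split the pairs `U × U'` into the four blocks `V × V'`, `V × W'`, `W × V'`, `W × W'`. With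
`m = s + t - 2`, the first block is complete, with `⌊m/2⌋²` edges. The edges of `E` in `W × V'`
are exactly `W × S'`, those in `V × W'` form the disjoint rectangles `Sᵢ × Wᵢ'`, and those in
`W × W'` are the `(t - s)`-regular graphs between `Wᵢ` and `Wᵢ'`, disjoint since the `Wᵢ` are.
As `|W| = |W'| = n - ⌊m/2⌋`, the total is `⌊m/2⌋² + (2(s - 1) + (t - s))(n - ⌊m/2⌋)`,
which is `mn - ⌊m²/4⌋`.
-/

open Finset

theorem Nat.div_two_mul_div_two_add_mul_sub {m n : ℕ} (h : m / 2 ≤ n) :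
    m / 2 * (m / 2) + m * (n - m / 2) = m * n - m ^ 2 / 4 := by
  obtain ⟨d, rfl⟩ := Nat.exists_eq_add_of_le h
  rw [Nat.add_sub_cancel_left]
  obtain ⟨k, rfl | rfl⟩ := Nat.even_or_odd' m
  · rw [show 2 * k / 2 = k by omega, show (2 * k) ^ 2 = 4 * (k * k) by ring,
      show 2 * k * (k + d) = k * k + (k * k + 2 * k * d) by ring]
    omega
  · rw [show (2 * k + 1) / 2 = k by omega, show (2 * k + 1) ^ 2 = 4 * (k * k + k) + 1 by ring,
      show (2 * k + 1) * (k + d) = k * k + k + (k * k + (2 * k + 1) * d) by ring]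
    omega

section Counting

variable {ι α β : Type*} [DecidableEq β]

theorem card_biUnion_of_pairwiseDisjoint_image {s : Finset ι} {F : ι → Finset β}
    {P : ι → Finset α} (g : β → α) (hP : (s : Set ι).PairwiseDisjoint P)
    (hF : ∀ i ∈ s, ∀ x ∈ F i, g x ∈ P i) : #(s.biUnion F) = ∑ i ∈ s, #(F i) :=
  card_biUnion fun i hi j hj hij => disjoint_left.2 fun x hxi hxj =>
    disjoint_left.1 (hP hi hj hij) (hF i hi x hxi) (hF j hj x hxj)

variable [DecidableEq α]

theorem card_inter_product_of_forall_card_filter (E : Finset (α × β)) {A : Finset α} {B : Finset β}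
    {d : ℕ} (h : ∀ u ∈ A, #(B.filter fun v => (u, v) ∈ E) = d) : #(E ∩ A ×ˢ B) = #A * d := by
  rw [inter_comm, ← filter_mem_eq_inter, card_filter, sum_product]
  simp_rw [← card_filter]
  rw [sum_congr rfl h, sum_const, smul_eq_mul]

theorem card_eq_sum_card_inter_product [Fintype α] [Fintype β] (E : Finset (α × β))
    {V W : Finset α} {V' W' : Finset β} (h : IsCompl V W) (h' : IsCompl V' W') :
    #E = #(E ∩ V ×ˢ V') + #(E ∩ V ×ˢ W') + #(E ∩ W ×ˢ V') + #(E ∩ W ×ˢ W') := by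
  have split : ∀ {X Y : Finset (α × β)}, Disjoint X Y → #(E ∩ (X ∪ Y)) = #(E ∩ X) + #(E ∩ Y) :=
    fun hXY => by
      rw [inter_union_distrib_left,
        card_union_of_disjoint (hXY.mono inter_subset_right inter_subset_right)]
  have huniv : (V ∪ W) ×ˢ (V' ∪ W') = univ := by
    rw [← sup_eq_union, ← sup_eq_union, h.sup_eq_top, h'.sup_eq_top]; rfl
  calc #E = #(E ∩ (V ∪ W) ×ˢ (V' ∪ W')) := by rw [huniv, inter_univ]
    _ = _ := by
      rw [union_product, split (disjoint_product.2 (.inl h.disjoint)), product_union,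
        product_union, split (disjoint_product.2 (.inr h'.disjoint)),
        split (disjoint_product.2 (.inr h'.disjoint)), ← add_assoc]

end Counting

section Construction

variable {ι α β : Type*} [Fintype ι] [DecidableEq α] [DecidableEq β] {E : Finset (α × β)}
  {V W : Finset α} {V' W' S' : Finset β} {Wp Si : ι → Finset α} {Wp' : ι → Finset β}

theorem inter_W_product_V' (hVW : Disjoint V W) (hVW' : Disjoint V' W')
    (hWu : univ.biUnion Wp = W) (hWp' : ∀ i, Wp' i ⊆ W') (hSi : ∀ i, Si i ⊆ V)
    (hS' : S' ⊆ V') (hE2 : ∀ i, ∀ u ∈ Wp i, ∀ v ∈ S', (u, v) ∈ E)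
    (hE4 : ∀ u v, (u, v) ∈ E →
      (u ∈ V ∧ v ∈ V') ∨ ∃ i, (u ∈ Wp i ∧ v ∈ Wp' i) ∨
        (u ∈ Wp i ∧ v ∈ S') ∨ (u ∈ Si i ∧ v ∈ Wp' i)) :
    E ∩ W ×ˢ V' = W ×ˢ S' := by
  ext ⟨u, v⟩
  simp only [mem_inter, mem_product]
  constructor
  · rintro ⟨huv, hu, hv⟩
    rcases hE4 u v huv with ⟨hu', -⟩ | ⟨i, ⟨-, hv'⟩ | ⟨-, hv'⟩ | ⟨hu', -⟩⟩
    · exact (disjoint_left.1 hVW hu' hu).elim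
    · exact (disjoint_left.1 hVW' hv (hWp' i hv')).elim
    · exact ⟨hu, hv'⟩
    · exact (disjoint_left.1 hVW (hSi i hu') hu).elim
  · rintro ⟨hu, hv⟩
    obtain ⟨i, -, hui⟩ := mem_biUnion.1 (hWu ▸ hu)
    exact ⟨hE2 i u hui v hv, hu, hS' hv⟩

theorem inter_V_product_W' (hVW : Disjoint V W) (hVW' : Disjoint V' W')
    (hWp : ∀ i, Wp i ⊆ W) (hWp' : ∀ i, Wp' i ⊆ W') (hSi : ∀ i, Si i ⊆ V)
    (hE3 : ∀ i, ∀ u ∈ Si i, ∀ v ∈ Wp' i, (u, v) ∈ E)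
    (hE4 : ∀ u v, (u, v) ∈ E →
      (u ∈ V ∧ v ∈ V') ∨ ∃ i, (u ∈ Wp i ∧ v ∈ Wp' i) ∨
        (u ∈ Wp i ∧ v ∈ S') ∨ (u ∈ Si i ∧ v ∈ Wp' i)) :
    E ∩ V ×ˢ W' = univ.biUnion fun i => Si i ×ˢ Wp' i := by
  ext ⟨u, v⟩
  simp only [mem_inter, mem_product, mem_biUnion, mem_univ, true_and]
  constructor
  · rintro ⟨huv, hu, hv⟩
    rcases hE4 u v huv with ⟨-, hv'⟩ | ⟨i, ⟨hu', -⟩ | ⟨hu', -⟩ | h⟩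
    · exact (disjoint_left.1 hVW' hv' hv).elim
    · exact (disjoint_left.1 hVW hu (hWp i hu')).elim
    · exact (disjoint_left.1 hVW hu (hWp i hu')).elim
    · exact ⟨i, h⟩
  · rintro ⟨i, hu, hv⟩
    exact ⟨hE3 i u hu v hv, hSi i hu, hWp' i hv⟩

theorem inter_W_product_W' (hVW : Disjoint V W) (hVW' : Disjoint V' W')
    (hWp : ∀ i, Wp i ⊆ W) (hWp' : ∀ i, Wp' i ⊆ W') (hSi : ∀ i, Si i ⊆ V) (hS' : S' ⊆ V')
    (hE4 : ∀ u v, (u, v) ∈ E →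
      (u ∈ V ∧ v ∈ V') ∨ ∃ i, (u ∈ Wp i ∧ v ∈ Wp' i) ∨
        (u ∈ Wp i ∧ v ∈ S') ∨ (u ∈ Si i ∧ v ∈ Wp' i)) :
    E ∩ W ×ˢ W' = univ.biUnion fun i => E ∩ Wp i ×ˢ Wp' i := by
  ext ⟨u, v⟩
  simp only [mem_inter, mem_product, mem_biUnion, mem_univ, true_and]
  constructor
  · rintro ⟨huv, hu, hv⟩
    rcases hE4 u v huv with ⟨hu', -⟩ | ⟨i, h | ⟨-, hv'⟩ | ⟨hu', -⟩⟩
    · exact (disjoint_left.1 hVW hu' hu).elim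
    · exact ⟨i, huv, h⟩
    · exact (disjoint_left.1 hVW' (hS' hv') hv).elim
    · exact (disjoint_left.1 hVW (hSi i hu') hu).elim
  · rintro ⟨i, huv, hu, hv⟩
    exact ⟨huv, hWp i hu, hWp' i hv⟩

end Construction

theorem stmt13_general (n s t l : ℕ) (hs : 1 ≤ s) (hst : s ≤ t)
    (E : Finset (Fin n × Fin n))
    (V W V' W' : Finset (Fin n))
    (Wp Wp' : Fin l → Finset (Fin n))
    (S' : Finset (Fin n)) (Si : Fin l → Finset (Fin n))
    (hVW : Disjoint V W) (hVWu : V ∪ W = univ)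
    (hVW' : Disjoint V' W') (hVWu' : V' ∪ W' = univ)
    (hV : V.card = (s + t - 2) / 2) (hV' : V'.card = (s + t - 2) / 2)
    (hWdisj : ∀ i j, i ≠ j → Disjoint (Wp i) (Wp j))
    (hWdisj' : ∀ i j, i ≠ j → Disjoint (Wp' i) (Wp' j))
    (hWu : univ.biUnion Wp = W) (hWu' : univ.biUnion Wp' = W')
    (hS'sub : S' ⊆ V') (hS'c : S'.card = s - 1)
    (hSisub : ∀ i, Si i ⊆ V) (hSic : ∀ i, (Si i).card = s - 1)
    (hE1 : ∀ u ∈ V, ∀ v ∈ V', (u, v) ∈ E)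
    (hE2 : ∀ i, ∀ u ∈ Wp i, ∀ v ∈ S', (u, v) ∈ E)
    (hE3 : ∀ i, ∀ u ∈ Si i, ∀ v ∈ Wp' i, (u, v) ∈ E)
    (hreg1 : ∀ i, ∀ u ∈ Wp i, ((Wp' i).filter fun v => (u, v) ∈ E).card = t - s)
    (hE4 : ∀ u v : Fin n, (u, v) ∈ E →
      (u ∈ V ∧ v ∈ V') ∨ ∃ i, (u ∈ Wp i ∧ v ∈ Wp' i) ∨
        (u ∈ Wp i ∧ v ∈ S') ∨ (u ∈ Si i ∧ v ∈ Wp' i)) :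
    E.card = (s + t - 2) * n - (s + t - 2) ^ 2 / 4 := by
  have hWp i : Wp i ⊆ W := hWu ▸ subset_biUnion_of_mem Wp (mem_univ i)
  have hWp' i : Wp' i ⊆ W' := hWu' ▸ subset_biUnion_of_mem Wp' (mem_univ i)
  have hcompl : IsCompl V W := ⟨hVW, codisjoint_iff.2 hVWu⟩
  have hcompl' : IsCompl V' W' := ⟨hVW', codisjoint_iff.2 hVWu'⟩
  have hcardW : #W = n - (s + t - 2) / 2 := by
    rw [← hcompl.compl_eq, card_compl, Fintype.card_fin, hV]
  have hcardW' : #W' = n - (s + t - 2) / 2 := by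
    rw [← hcompl'.compl_eq, card_compl, Fintype.card_fin, hV']
  have cardVV' : #(E ∩ V ×ˢ V') = (s + t - 2) / 2 * ((s + t - 2) / 2) := by
    rw [inter_eq_right.2 fun p hp => hE1 p.1 (mem_product.1 hp).1 p.2 (mem_product.1 hp).2,
      card_product, hV, hV']
  have cardWV' : #(E ∩ W ×ˢ V') = #W * (s - 1) := by
    rw [inter_W_product_V' hVW hVW' hWu hWp' hSisub hS'sub hE2 hE4, card_product, hS'c]
  have cardVW' : #(E ∩ V ×ˢ W') = (s - 1) * #W' := by
    rw [inter_V_product_W' hVW hVW' hWp hWp' hSisub hE3 hE4,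
      card_biUnion_of_pairwiseDisjoint_image Prod.snd (fun i _ j _ => hWdisj' i j)
        fun i _ p hp => (mem_product.1 hp).2,
      ← hWu', card_biUnion fun i _ j _ => hWdisj' i j, mul_sum]
    simp only [card_product, hSic]
  have cardWW' : #(E ∩ W ×ˢ W') = #W * (t - s) := by
    rw [inter_W_product_W' hVW hVW' hWp hWp' hSisub hS'sub hE4,
      card_biUnion_of_pairwiseDisjoint_image Prod.fst (fun i _ j _ => hWdisj i j)
        fun i _ p hp => (mem_product.1 (mem_inter.1 hp).2).1,
      ← hWu, card_biUnion fun i _ j _ => hWdisj i j, sum_mul]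
    exact sum_congr rfl fun i _ => card_inter_product_of_forall_card_filter E (hreg1 i)
  have hk : (s + t - 2) / 2 ≤ n := hV ▸ (card_le_univ V).trans_eq (Fintype.card_fin n)
  rw [card_eq_sum_card_inter_product E hcompl hcompl', cardVV', cardWV', cardVW', cardWW',
    hcardW, hcardW', ← Nat.div_two_mul_div_two_add_mul_sub hk,
    ← show s - 1 + (s - 1) + (t - s) = s + t - 2 by omega]
  ring

theorem stmt13 (n s t l : ℕ) (hs : 1 ≤ s) (hst : s ≤ t)
    (E : Finset (Fin n × Fin n))
    (V W V' W' : Finset (Fin n))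
    (Wp Wp' : Fin l → Finset (Fin n))
    (S' : Finset (Fin n)) (Si : Fin l → Finset (Fin n))
    (hVW : Disjoint V W) (hVWu : V ∪ W = univ)
    (hVW' : Disjoint V' W') (hVWu' : V' ∪ W' = univ)
    (hV : V.card = (s + t - 2) / 2) (hV' : V'.card = (s + t - 2) / 2)
    (hWdisj : ∀ i j, i ≠ j → Disjoint (Wp i) (Wp j))
    (hWdisj' : ∀ i j, i ≠ j → Disjoint (Wp' i) (Wp' j))
    (hWu : univ.biUnion Wp = W) (hWu' : univ.biUnion Wp' = W')
    (hWc : ∀ i, (Wp i).card = (Wp' i).card)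
    (hWsize : ∀ i, t - s ≤ (Wp i).card)
    (hS'sub : S' ⊆ V') (hS'c : S'.card = s - 1)
    (hSisub : ∀ i, Si i ⊆ V) (hSic : ∀ i, (Si i).card = s - 1)
    (hE1 : ∀ u ∈ V, ∀ v ∈ V', (u, v) ∈ E)
    (hE2 : ∀ i, ∀ u ∈ Wp i, ∀ v ∈ S', (u, v) ∈ E)
    (hE3 : ∀ i, ∀ u ∈ Si i, ∀ v ∈ Wp' i, (u, v) ∈ E)
    (hreg1 : ∀ i, ∀ u ∈ Wp i, ((Wp' i).filter fun v => (u, v) ∈ E).card = t - s)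
    (hreg2 : ∀ i, ∀ v ∈ Wp' i, ((Wp i).filter fun u => (u, v) ∈ E).card = t - s)
    (hE4 : ∀ u v : Fin n, (u, v) ∈ E →
      (u ∈ V ∧ v ∈ V') ∨ ∃ i, (u ∈ Wp i ∧ v ∈ Wp' i) ∨
        (u ∈ Wp i ∧ v ∈ S') ∨ (u ∈ Si i ∧ v ∈ Wp' i)) :
    E.card = (s + t - 2) * n - (s + t - 2) ^ 2 / 4 :=
  stmt13_general n s t l hs hst E V W V' W' Wp Wp' S' Si hVW hVWu hVW' hVWu' hV hV' hWdisj hWdisj'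
    hWu hWu' hS'sub hS'c hSisub hSic hE1 hE2 hE3 hreg1 hE4
end

section
/- An n-by-n bipartite graph in which some set of s-1 vertices of U and some set of t-1 vertices of U' are each complete to the opposite side (and there are no other edges) is K_{(s,t)}-saturated and has exactly n² - (n-s+1)(n-t+1) edges. -/
open Finset

def edgesTouching {n : ℕ} (S T : Finset (Fin n)) : Finset (Fin n × Fin n) :=
  univ.filter fun p => p.1 ∈ S ∨ p.2 ∈ T

section EdgesTouching

variable {n : ℕ} {S T : Finset (Fin n)}

@[simp]
theorem mem_edgesTouching {p : Fin n × Fin n} :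
    p ∈ edgesTouching S T ↔ p.1 ∈ S ∨ p.2 ∈ T := by
  simp [edgesTouching]

theorem edgesTouching_eq_compl_product : edgesTouching S T = (Sᶜ ×ˢ Tᶜ)ᶜ := by
  ext p
  simp [or_iff_not_imp_left]

theorem card_edgesTouching : #(edgesTouching S T) = n ^ 2 - (n - #S) * (n - #T) := by
  rw [edgesTouching_eq_compl_product, card_compl, card_product, card_compl, card_compl]
  simp [sq]

theorem not_containsK_edgesTouching {a b : ℕ} (ha : #S < a) (hb : #T < b) :
    ¬ containsK (edgesTouching S T) a b := by
  rintro ⟨A, B, rfl, rfl, hAB⟩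
  obtain ⟨u, huA, huS⟩ := exists_mem_notMem_of_card_lt_card ha
  obtain ⟨v, hvB, hvT⟩ := exists_mem_notMem_of_card_lt_card hb
  simpa [huS, hvT] using hAB u huA v hvB

theorem containsK_insert_edgesTouching {u v : Fin n} (huv : (u, v) ∉ edgesTouching S T) :
    containsK (insert (u, v) (edgesTouching S T)) (#S + 1) (#T + 1) := by
  rw [mem_edgesTouching, not_or] at huv
  refine ⟨insert u S, insert v T, card_insert_of_notMem huv.1, card_insert_of_notMem huv.2, ?_⟩
  intro x hx y hy
  rw [mem_insert] at hx hy ⊢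
  rcases hx with rfl | hx
  · rcases hy with rfl | hy
    · exact Or.inl rfl
    · exact Or.inr (mem_edgesTouching.2 (Or.inr hy))
  · exact Or.inr (mem_edgesTouching.2 (Or.inl hx))

end EdgesTouching

theorem stmt17 (n s t : ℕ) (hs : 1 ≤ s) (hst : s ≤ t) (htn : t ≤ n)
    (S : Finset (Fin n)) (T' : Finset (Fin n))
    (hS : S.card = s - 1) (hT' : T'.card = t - 1)
    (E : Finset (Fin n × Fin n))
    (hE : E = univ.filter fun p : Fin n × Fin n => p.1 ∈ S ∨ p.2 ∈ T') :
    ¬ containsK E s t ∧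
      (∀ u v : Fin n, (u, v) ∉ E → containsK (insert (u, v) E) s t) ∧
      E.card = n ^ 2 - (n - s + 1) * (n - t + 1) := by
  change E = edgesTouching S T' at hE
  subst hE
  refine ⟨not_containsK_edgesTouching (by omega) (by omega), fun u v huv => ?_, ?_⟩
  · have hs' : s = #S + 1 := by omega
    have ht' : t = #T' + 1 := by omega
    rw [hs', ht']
    exact containsK_insert_edgesTouching huv
  · rw [card_edgesTouching, hS, hT', show n - (s - 1) = n - s + 1 by omega,
      show n - (t - 1) = n - t + 1 by omega]
end

section
/- If G is a K_{2,3}-saturated n-by-n bipartite graph with exactly 3n-3 edges and minimum degree 2, with non-adjacent degree-2 vertices u₀ ∈ U, u₀' ∈ U', then adding the edge u₀u₀' creates a K_{2,3} all of whose vertices lie in A₀ ∪ A₀', where A₀ = {u₀} ∪ N(u₀') and A₀' = {u₀'} ∪ N(u₀), and consequently the bipartite graph spanned between A₀ and A₀' has at least 6 edges. -/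
/-!
A copy of `K_{2,3}` created by adding `u₀u₀'` must use the new edge, since `G` itself is
`K_{2,3}`-free; so it contains `u₀` and `u₀'`, and each of its other vertices is adjacent to
`u₀'` or `u₀`, i.e. lies in `A₀` or `A₀'`. Between `A₀` and `A₀'` we then find the two edges
at `u₀`, the two edges at `u₀'`, and the `1 × 2` (or `2 × 1`) rectangle of the copy avoiding
`u₀` and `u₀'`; these six edges are distinct because `u₀u₀'` is not an edge.
-/

open Finset

variable {n : ℕ} {E : Finset (Fin n × Fin n)} {x y : Fin n} {S T : Finset (Fin n)}

theorem mem_and_mem_of_not_containsK (hfree : ¬ containsK E S.card T.card)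
    (hST : ∀ u ∈ S, ∀ v ∈ T, (u, v) ∈ insert (x, y) E) : x ∈ S ∧ y ∈ T := by
  by_contra hxy
  refine hfree ⟨S, T, rfl, rfl, fun u hu v hv => mem_of_mem_insert_of_ne (hST u hu v hv) ?_⟩
  rintro ⟨⟩
  exact hxy ⟨hu, hv⟩

theorem subset_insert_filter_left_of_forall_mem_insert (hy : y ∈ T)
    (hST : ∀ u ∈ S, ∀ v ∈ T, (u, v) ∈ insert (x, y) E) :
    S ⊆ insert x (univ.filter fun u => (u, y) ∈ E) := by
  intro u hu
  rw [mem_insert, mem_filter]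
  by_cases hux : u = x
  · exact Or.inl hux
  · exact Or.inr ⟨mem_univ _, mem_of_mem_insert_of_ne (hST u hu y hy) (by simp [hux])⟩

theorem subset_insert_filter_right_of_forall_mem_insert (hx : x ∈ S)
    (hST : ∀ u ∈ S, ∀ v ∈ T, (u, v) ∈ insert (x, y) E) :
    T ⊆ insert y (univ.filter fun v => (x, v) ∈ E) := by
  intro v hv
  rw [mem_insert, mem_filter]
  by_cases hvy : v = y
  · exact Or.inl hvy
  · exact Or.inr ⟨mem_univ _, mem_of_mem_insert_of_ne (hST x hx v hv) (by simp [hvy])⟩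

theorem degL_add_degR_add_mul_le_card_filter (hxy : (x, y) ∉ E) (hx : x ∈ S) (hy : y ∈ T)
    (hST : ∀ u ∈ S, ∀ v ∈ T, (u, v) ∈ insert (x, y) E) :
    degL E x + degR E y + (S.card - 1) * (T.card - 1) ≤
      (E.filter fun p => p.1 ∈ insert x (univ.filter fun u => (u, y) ∈ E) ∧
        p.2 ∈ insert y (univ.filter fun v => (x, v) ∈ E)).card := by
  set B := E.filter fun p => p.1 ∈ insert x (univ.filter fun u => (u, y) ∈ E) ∧
    p.2 ∈ insert y (univ.filter fun v => (x, v) ∈ E)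
  have hrow : E.filter (fun p => p.1 = x) ⊆ B := by
    rintro ⟨u, v⟩ h
    simp only [mem_filter] at h
    obtain ⟨huv, rfl⟩ := h
    simp [B, huv]
  have hcol : E.filter (fun p => p.2 = y) ⊆ B := by
    rintro ⟨u, v⟩ h
    simp only [mem_filter] at h
    obtain ⟨huv, rfl⟩ := h
    simp [B, huv]
  have hrect : (S.erase x) ×ˢ (T.erase y) ⊆ B := by
    rintro ⟨u, v⟩ h
    obtain ⟨hu, hv⟩ := mem_product.mp h
    refine mem_filter.mpr ⟨mem_of_mem_insert_of_ne (hST u (mem_of_mem_erase hu) v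
      (mem_of_mem_erase hv)) (by simp [ne_of_mem_erase hu]), ?_, ?_⟩
    · exact subset_insert_filter_left_of_forall_mem_insert hy hST (mem_of_mem_erase hu)
    · exact subset_insert_filter_right_of_forall_mem_insert hx hST (mem_of_mem_erase hv)
  have hrow_col : Disjoint (E.filter fun p => p.1 = x) (E.filter fun p => p.2 = y) := by
    rw [disjoint_filter]
    rintro ⟨u, v⟩ huv rfl rfl
    exact hxy huv
  have hrect_disj : Disjoint ((E.filter fun p => p.1 = x) ∪ (E.filter fun p => p.2 = y))
      ((S.erase x) ×ˢ (T.erase y)) := by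
    rw [disjoint_right]
    rintro ⟨u, v⟩ h
    obtain ⟨hu, hv⟩ := mem_product.mp h
    simp [ne_of_mem_erase hu, ne_of_mem_erase hv]
  calc degL E x + degR E y + (S.card - 1) * (T.card - 1)
      = ((E.filter fun p => p.1 = x) ∪ (E.filter fun p => p.2 = y) ∪
          (S.erase x) ×ˢ (T.erase y)).card := by
        rw [card_union_of_disjoint hrect_disj, card_union_of_disjoint hrow_col, card_product,
          card_erase_of_mem hx, card_erase_of_mem hy, degL, degR]
    _ ≤ _ := card_le_card (union_subset (union_subset hrow hcol) hrect)

theorem stmt18_general (n : ℕ)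
    (E : Finset (Fin n × Fin n)) (hsat : Saturated 2 3 E)
    (u₀ u₀' : Fin n) (hd₀ : degL E u₀ = 2) (hd₀' : degR E u₀' = 2)
    (hnonadj : (u₀, u₀') ∉ E)
    (A₀ A₀' : Finset (Fin n))
    (hA₀ : A₀ = insert u₀ (univ.filter fun u => (u, u₀') ∈ E))
    (hA₀' : A₀' = insert u₀' (univ.filter fun v => (u₀, v) ∈ E)) :
    (∃ S T : Finset (Fin n), S ⊆ A₀ ∧ T ⊆ A₀' ∧
        ((S.card = 2 ∧ T.card = 3) ∨ (S.card = 3 ∧ T.card = 2)) ∧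
        u₀ ∈ S ∧ u₀' ∈ T ∧
        ∀ u ∈ S, ∀ v ∈ T, (u, v) ∈ insert (u₀, u₀') E) ∧
      6 ≤ (E.filter fun p => p.1 ∈ A₀ ∧ p.2 ∈ A₀').card := by
  obtain ⟨hfree, hadd⟩ := hsat
  obtain ⟨S, T, hcards, hST⟩ : ∃ S T : Finset (Fin n),
      ((S.card = 2 ∧ T.card = 3) ∨ (S.card = 3 ∧ T.card = 2)) ∧
        ∀ u ∈ S, ∀ v ∈ T, (u, v) ∈ insert (u₀, u₀') E := by
    rcases hadd u₀ u₀' hnonadj with ⟨S, T, hS, hT, hST⟩ | ⟨S, T, hS, hT, hST⟩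
    exacts [⟨S, T, .inl ⟨hS, hT⟩, hST⟩, ⟨S, T, .inr ⟨hS, hT⟩, hST⟩]
  have hfreeST : ¬ containsK E S.card T.card := by
    rcases hcards with ⟨hS, hT⟩ | ⟨hS, hT⟩ <;> rw [hS, hT] <;> tauto
  obtain ⟨hu₀, hu₀'⟩ := mem_and_mem_of_not_containsK hfreeST hST
  subst hA₀ hA₀'
  refine ⟨⟨S, T, subset_insert_filter_left_of_forall_mem_insert hu₀' hST,
    subset_insert_filter_right_of_forall_mem_insert hu₀ hST, hcards, hu₀, hu₀', hST⟩, ?_⟩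
  calc 6 = degL E u₀ + degR E u₀' + (S.card - 1) * (T.card - 1) := by
        rcases hcards with ⟨hS, hT⟩ | ⟨hS, hT⟩ <;> simp [hd₀, hd₀', hS, hT]
    _ ≤ _ := degL_add_degR_add_mul_le_card_filter hnonadj hu₀ hu₀' hST

theorem stmt18 (n : ℕ) (hn : 4 ≤ n)
    (E : Finset (Fin n × Fin n)) (hsat : Saturated 2 3 E)
    (hcard : E.card = 3 * n - 3)
    (hminL : ∀ u : Fin n, 2 ≤ degL E u) (hminR : ∀ v : Fin n, 2 ≤ degR E v)
    (u₀ u₀' : Fin n) (hd₀ : degL E u₀ = 2) (hd₀' : degR E u₀' = 2)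
    (hnonadj : (u₀, u₀') ∉ E)
    (A₀ A₀' : Finset (Fin n))
    (hA₀ : A₀ = insert u₀ (univ.filter fun u => (u, u₀') ∈ E))
    (hA₀' : A₀' = insert u₀' (univ.filter fun v => (u₀, v) ∈ E)) :
    (∃ S T : Finset (Fin n), S ⊆ A₀ ∧ T ⊆ A₀' ∧
        ((S.card = 2 ∧ T.card = 3) ∨ (S.card = 3 ∧ T.card = 2)) ∧
        u₀ ∈ S ∧ u₀' ∈ T ∧
        ∀ u ∈ S, ∀ v ∈ T, (u, v) ∈ insert (u₀, u₀') E) ∧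
      6 ≤ (E.filter fun p => p.1 ∈ A₀ ∧ p.2 ∈ A₀').card :=
  stmt18_general n E hsat u₀ u₀' hd₀ hd₀' hnonadj A₀ A₀' hA₀ hA₀'
end
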